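/- arXiv:0901.4197 — 6 statements merged into one kernel-verified Lean document; each statement's English description precedes it below -/
import Mathlib

section
/- Let 1 ≤ q < β ≤ ∞ with 1/t = 1/q − 1/β, and let v be a weight on ℝⁿ satisfying sup_{Q cube} |Q|^{1/β − 1} ‖v χ_Q‖_t ‖v^{-1} χ_Q‖_{q'} < ∞ where 1/q + 1/q' = 1. Then there is a constant C such that for every measurable f and λ > 0, (∫_{{x : m_{1,β}f(x) > λ}} v(y)^t dy)^{1/t} ≤ C λ^{-1} ‖f v‖_q. -/
open MeasureTheory ENNReal Set Filter

noncomputable section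

namespace RN

variable {n : ℕ}

/-- The half-open cube `I_k^r = ∏_j [k_j r, (k_j+1) r)`. -/
def icube (k : Fin n → ℤ) (r : ℝ) : Set (Fin n → ℝ) :=
  {y | ∀ j, (k j : ℝ) * r ≤ y j ∧ y j < ((k j : ℝ) + 1) * r}

/-- The open cube `J_x^r` of center `x` and side `r`. -/
def jcube (x : Fin n → ℝ) (r : ℝ) : Set (Fin n → ℝ) :=
  {y | ∀ j, x j - r / 2 < y j ∧ y j < x j + r / 2}

/-- A closed axis-parallel cube with center `c` and half-side `h`. -/
def qcube (c : Fin n → ℝ) (h : ℝ) : Set (Fin n → ℝ) :=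
  {y | ∀ j, |y j - c j| ≤ h}

/-- `L^q` "norm" of an `ℝ≥0∞`-valued function on a set. -/
def lqn (q : ℝ≥0∞) (A : Set (Fin n → ℝ)) (g : (Fin n → ℝ) → ℝ≥0∞) : ℝ≥0∞ :=
  if q = ∞ then essSup (A.indicator g) volume
  else (∫⁻ x in A, g x ^ q.toReal) ^ q.toReal⁻¹

/-- The quantity `_r‖g‖_{q,p}`. -/
def blockNorm (q p : ℝ≥0∞) (g : (Fin n → ℝ) → ℝ≥0∞) (r : ℝ) : ℝ≥0∞ :=
  if p = ∞ then ⨆ x : Fin n → ℝ, lqn q (jcube x r) g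
  else (∑' k : Fin n → ℤ, lqn q (icube k r) g ^ p.toReal) ^ p.toReal⁻¹

/-- The `(L^q, ℓ^p)^α(ℝⁿ)` norm. -/
def amal (n : ℕ) (q p α : ℝ≥0∞) (g : (Fin n → ℝ) → ℝ≥0∞) : ℝ≥0∞ :=
  ⨆ (r : ℝ) (_ : 0 < r),
    ENNReal.ofReal r ^ ((n : ℝ) * (α⁻¹.toReal - q⁻¹.toReal - p⁻¹.toReal)) * blockNorm q p g r

/-- The fractional maximal operator `m_{q,β}` (supremum over axis-parallel cubes). -/
def maxOp (q β : ℝ≥0∞) (g : (Fin n → ℝ) → ℝ≥0∞) (x : Fin n → ℝ) : ℝ≥0∞ :=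
  ⨆ (c : Fin n → ℝ) (h : ℝ) (_ : 0 < h) (_ : x ∈ qcube c h),
    volume (qcube c h) ^ (β⁻¹.toReal - q⁻¹.toReal) * lqn q (qcube c h) g

/-- The weak `L^α` quasi-norm. -/
def weakNorm (α : ℝ≥0∞) (g : (Fin n → ℝ) → ℝ≥0∞) : ℝ≥0∞ :=
  ⨆ (l : ℝ) (_ : 0 < l),
    ENNReal.ofReal l * volume {x | ENNReal.ofReal l < g x} ^ α⁻¹.toReal

/-- Pointwise extended norm of a real-valued function. -/
def en (f : (Fin n → ℝ) → ℝ) : (Fin n → ℝ) → ℝ≥0∞ := fun x => (‖f x‖₊ : ℝ≥0∞)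


section Helpers

lemma qcube_eq_closedBall (c : Fin n → ℝ) {h : ℝ} (hh : 0 ≤ h) :
    qcube c h = Metric.closedBall c h := by
  ext y
  simp only [qcube, mem_setOf_eq, Metric.mem_closedBall, dist_pi_le_iff hh, Real.dist_eq]

lemma qcube_eq_pi (c : Fin n → ℝ) (h : ℝ) :
    qcube c h = Set.pi univ (fun j => Icc (c j - h) (c j + h)) := by
  ext y
  simp only [qcube, mem_setOf_eq, Set.mem_pi, mem_univ, mem_Icc, abs_le, true_implies]
  constructor
  · intro H j
    obtain ⟨h1, h2⟩ := H j
    exact ⟨by linarith, by linarith⟩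
  · intro H j
    obtain ⟨h1, h2⟩ := H j
    exact ⟨by linarith, by linarith⟩

lemma volume_qcube (c : Fin n → ℝ) (h : ℝ) :
    volume (qcube c h) = ENNReal.ofReal (2 * h) ^ n := by
  rw [qcube_eq_pi, volume_pi_pi]
  simp only [Real.volume_Icc]
  have : ∀ x : Fin n, ENNReal.ofReal (c x + h - (c x - h)) = ENNReal.ofReal (2 * h) := by
    intro x; congr 1; ring
  simp only [this, Finset.prod_const, Finset.card_univ, Fintype.card_fin]

lemma measurableSet_qcube (c : Fin n → ℝ) {h : ℝ} (hh : 0 ≤ h) :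
    MeasurableSet (qcube c h) := by
  rw [qcube_eq_closedBall c hh]
  exact Metric.isClosed_closedBall.measurableSet

lemma two_term_rpow {ρ : ℝ} (hρ : 1 ≤ ρ) (a b : ℝ≥0∞) : a ^ ρ + b ^ ρ ≤ (a + b) ^ ρ := by
  have h0 : (0:ℝ) < ρ := lt_of_lt_of_le one_pos hρ
  have h := ENNReal.rpow_add_rpow_le a b one_pos hρ
  simp only [ENNReal.rpow_one, one_div_one] at h
  calc a ^ ρ + b ^ ρ = ((a ^ ρ + b ^ ρ) ^ (1/ρ)) ^ ρ := by
        rw [← ENNReal.rpow_mul, one_div, inv_mul_cancel₀ h0.ne', ENNReal.rpow_one]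
    _ ≤ (a + b) ^ ρ := ENNReal.rpow_le_rpow h h0.le

lemma tsum_rpow_le {ι : Type*} (a : ι → ℝ≥0∞) {ρ : ℝ} (hρ : 1 ≤ ρ) :
    ∑' i, a i ^ ρ ≤ (∑' i, a i) ^ ρ := by
  have h0 : (0:ℝ) < ρ := lt_of_lt_of_le one_pos hρ
  rw [ENNReal.tsum_eq_iSup_sum]
  refine iSup_le fun s => ?_
  classical
  have key : ∀ s : Finset ι, (∑ i ∈ s, a i ^ ρ) ≤ (∑ i ∈ s, a i) ^ ρ := by
    intro s
    induction s using Finset.induction_on with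
    | empty => simp [ENNReal.zero_rpow_of_pos h0]
    | insert x s' hx ih =>
      rw [Finset.sum_insert hx, Finset.sum_insert hx]
      calc a x ^ ρ + ∑ i ∈ s', a i ^ ρ ≤ a x ^ ρ + (∑ i ∈ s', a i) ^ ρ := by
            exact add_le_add_right ih _
        _ ≤ (a x + ∑ i ∈ s', a i) ^ ρ := two_term_rpow hρ _ _
  calc (∑ i ∈ s, a i ^ ρ) ≤ (∑ i ∈ s, a i) ^ ρ := key s
    _ ≤ (∑' i, a i) ^ ρ := ENNReal.rpow_le_rpow (ENNReal.sum_le_tsum s) h0.le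

lemma holder_lqn {q q' : ℝ≥0∞} (hq : 1 ≤ q) (hqtop : q ≠ ∞) (hq' : q⁻¹ + q'⁻¹ = 1)
    {S : Set (Fin n → ℝ)} (hS : MeasurableSet S) {g1 g2 : (Fin n → ℝ) → ℝ≥0∞}
    (h1 : Measurable g1) (h2 : Measurable g2) :
    ∫⁻ x in S, g1 x * g2 x ≤ lqn q S g1 * lqn q' S g2 := by
  rcases eq_or_lt_of_le hq with hq1 | hq1
  · -- q = 1, q' = ∞
    have hq'top : q' = ∞ := by
      have h1' : q⁻¹ = 1 := by rw [← hq1]; simp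
      rw [h1'] at hq'
      have : q'⁻¹ = 0 := by
        have := ENNReal.add_right_inj (a := (1:ℝ≥0∞)) (b := q'⁻¹) (c := 0) one_ne_top
        rw [add_zero] at this
        exact this.mp hq'
      simpa [ENNReal.inv_eq_zero] using this
    rw [hq'top]
    simp only [lqn, if_pos rfl, hqtop, if_neg hqtop, ← hq1]
    simp only [ENNReal.toReal_one, ENNReal.rpow_one, inv_one]
    set M := essSup (S.indicator g2) volume with hM
    have hae : ∀ᵐ x ∂(volume.restrict S), g2 x ≤ M := by
      filter_upwards [ae_restrict_mem hS, ae_restrict_of_ae (ENNReal.ae_le_essSup (S.indicator g2))]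
        with x hx h2x
      rwa [Set.indicator_of_mem hx] at h2x
    calc ∫⁻ x in S, g1 x * g2 x ≤ ∫⁻ x in S, g1 x * M := by
          refine lintegral_mono_ae ?_
          filter_upwards [hae] with x hx
          exact mul_le_mul_right hx _
      _ = (∫⁻ x in S, g1 x) * M := lintegral_mul_const M h1
  · -- 1 < q < ∞
    have hq'ne : q' ≠ ∞ := by
      intro hq'' ; rw [hq'', ENNReal.inv_top, add_zero] at hq'
      rw [ENNReal.inv_eq_one] at hq'
      exact hq1.ne' hq'
    have hq0 : q ≠ 0 := (lt_of_lt_of_le one_pos hq).ne'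
    have hq'0 : q' ≠ 0 := by
      intro h0; rw [h0, ENNReal.inv_zero] at hq'
      simp at hq'
    have hfin1 : q⁻¹ ≠ ∞ := ENNReal.inv_ne_top.mpr hq0
    have hfin2 : q'⁻¹ ≠ ∞ := ENNReal.inv_ne_top.mpr hq'0
    have htr : q.toReal⁻¹ + q'.toReal⁻¹ = 1 := by
      have := congrArg ENNReal.toReal hq'
      rwa [ENNReal.toReal_add hfin1 hfin2, ENNReal.toReal_inv, ENNReal.toReal_inv,
        ENNReal.toReal_one] at this
    have h1q : 1 < q.toReal := by
      rw [← ENNReal.toReal_one]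
      exact (ENNReal.toReal_lt_toReal one_ne_top hqtop).mpr hq1
    have hconj : q.toReal.HolderConjugate q'.toReal := Real.holderConjugate_iff.mpr ⟨h1q, htr⟩
    have H := ENNReal.lintegral_mul_le_Lp_mul_Lq (volume.restrict S) hconj
      h1.aemeasurable h2.aemeasurable
    simp only [Pi.mul_apply] at H
    simp only [lqn, if_neg hqtop, if_neg hq'ne, one_div] at H ⊢
    exact H

lemma measurable_en {f : (Fin n → ℝ) → ℝ} (hf : Measurable f) : Measurable (en f) :=
  measurable_coe_nnreal_ennreal.comp hf.nnnorm

lemma lqn_one (A : Set (Fin n → ℝ)) (g : (Fin n → ℝ) → ℝ≥0∞) :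
    lqn 1 A g = ∫⁻ x in A, g x := by
  simp [lqn]

lemma lqn_mono {qe : ℝ≥0∞} (hqe : qe ≠ ∞) {A B : Set (Fin n → ℝ)} (hAB : A ⊆ B)
    (g : (Fin n → ℝ) → ℝ≥0∞) : lqn qe A g ≤ lqn qe B g := by
  simp only [lqn, if_neg hqe]
  exact ENNReal.rpow_le_rpow (lintegral_mono_set hAB) (by positivity)

/-- The key one-cube estimate. -/
lemma percube {q β t q' : ℝ≥0∞}
    (hq : 1 ≤ q) (hqtop : q ≠ ∞) (hq' : q⁻¹ + q'⁻¹ = 1)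
    {v : (Fin n → ℝ) → ℝ} (hv : Measurable v) (hvpos : ∀ x, 0 < v x)
    {A : ℝ}
    (hA : ∀ (c : Fin n → ℝ) (h : ℝ), 0 < h →
      volume (qcube c h) ^ (β⁻¹.toReal - 1) * lqn t (qcube c h) (en v) *
        lqn q' (qcube c h) (en fun x => (v x)⁻¹) ≤ ENNReal.ofReal A)
    {f : (Fin n → ℝ) → ℝ} (hf : Measurable f)
    {L : ℝ≥0∞} {c : Fin n → ℝ} {h : ℝ} (hh : 0 < h)
    (hL : L ≤ volume (qcube c h) ^ (β⁻¹.toReal - 1) * ∫⁻ x in qcube c h, en f x) :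
    L * lqn t (qcube c h) (en v) ≤
      ENNReal.ofReal A * lqn q (qcube c h) (en fun x => f x * v x) := by
  have hfac : ∀ x, en f x = en (fun x => f x * v x) x * en (fun x => (v x)⁻¹) x := by
    intro x
    simp only [en, ← ENNReal.coe_mul, ← nnnorm_mul]
    congr 2
    field_simp [(hvpos x).ne']
  have hhold : ∫⁻ x in qcube c h, en f x ≤
      lqn q (qcube c h) (en fun x => f x * v x) * lqn q' (qcube c h) (en fun x => (v x)⁻¹) := by
    calc ∫⁻ x in qcube c h, en f x
        = ∫⁻ x in qcube c h, en (fun x => f x * v x) x * en (fun x => (v x)⁻¹) x := by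
          simp only [← hfac]
      _ ≤ _ := holder_lqn hq hqtop hq' (measurableSet_qcube c hh.le)
          (measurable_en (hf.mul hv)) (measurable_en (hv.inv)) 
  calc L * lqn t (qcube c h) (en v)
      ≤ (volume (qcube c h) ^ (β⁻¹.toReal - 1) * ∫⁻ x in qcube c h, en f x) *
          lqn t (qcube c h) (en v) := mul_le_mul_left hL _
    _ ≤ (volume (qcube c h) ^ (β⁻¹.toReal - 1) *
          (lqn q (qcube c h) (en fun x => f x * v x) *
            lqn q' (qcube c h) (en fun x => (v x)⁻¹))) *
          lqn t (qcube c h) (en v) := by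
        exact mul_le_mul_left (mul_le_mul_right hhold _) _
    _ = (volume (qcube c h) ^ (β⁻¹.toReal - 1) * lqn t (qcube c h) (en v) *
          lqn q' (qcube c h) (en fun x => (v x)⁻¹)) *
          lqn q (qcube c h) (en fun x => f x * v x) := by ring
    _ ≤ ENNReal.ofReal A * lqn q (qcube c h) (en fun x => f x * v x) :=
        mul_le_mul_left (hA c h hh) _

end Helpers

/-- Weighted weak-type estimate for `m_{1,β}` on `ℝⁿ` (Theorem A):
if `sup_Q |Q|^{1/β−1} ‖vχ_Q‖_t ‖v⁻¹χ_Q‖_{q'} < ∞` with `1/t = 1/q − 1/β`,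
`1/q + 1/q' = 1`, then `(∫_{{m_{1,β}f > λ}} v^t)^{1/t} ≤ C λ⁻¹ ‖fv‖_q`. -/
theorem weighted_weak_type_frac_max (n : ℕ) (hn : 0 < n) (q β t q' : ℝ≥0∞)
    (hq : 1 ≤ q) (hqβ : q < β) (ht : t⁻¹ = q⁻¹ - β⁻¹) (hq' : q⁻¹ + q'⁻¹ = 1)
    (v : (Fin n → ℝ) → ℝ) (hv : Measurable v) (hvpos : ∀ x, 0 < v x)
    (A : ℝ)
    (hA : ∀ (c : Fin n → ℝ) (h : ℝ), 0 < h →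
      volume (qcube c h) ^ (β⁻¹.toReal - 1) * lqn t (qcube c h) (en v) *
        lqn q' (qcube c h) (en fun x => (v x)⁻¹) ≤ ENNReal.ofReal A) :
    ∃ C > (0 : ℝ), ∀ f : (Fin n → ℝ) → ℝ, Measurable f → ∀ l : ℝ, 0 < l →
      lqn t {x | ENNReal.ofReal l < maxOp 1 β (en f) x} (en v) ≤
        ENNReal.ofReal C * (ENNReal.ofReal l)⁻¹ *
          lqn q univ (en fun x => f x * v x) := by
  classical
  -- basic exponent facts
  have hqtop : q ≠ ∞ := hqβ.ne_top
  have hq0 : q ≠ 0 := (lt_of_lt_of_le one_pos hq).ne'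
  have hβinv_lt : β⁻¹ < q⁻¹ := ENNReal.inv_lt_inv.mpr hqβ
  have htinv_pos : 0 < t⁻¹ := by rw [ht]; exact tsub_pos_iff_lt.mpr hβinv_lt
  have httop : t ≠ ∞ := ENNReal.inv_ne_zero.mp htinv_pos.ne'
  have h1t : 1 ≤ t := by
    rw [← ENNReal.inv_le_one, ht]
    exact le_trans tsub_le_self (ENNReal.inv_le_one.mpr hq)
  have hqt_le : q ≤ t := by
    rw [← ENNReal.inv_le_inv, ht]
    exact tsub_le_self
  set qt := q.toReal with hqtdef
  set tt := t.toReal with httdef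
  have hqt1 : 1 ≤ qt := by
    rw [hqtdef, ← ENNReal.toReal_one]
    exact ENNReal.toReal_mono hqtop hq
  have htt1 : 1 ≤ tt := by
    rw [httdef, ← ENNReal.toReal_one]
    exact ENNReal.toReal_mono httop h1t
  have hqtt : qt ≤ tt := ENNReal.toReal_mono httop hqt_le
  have hqtpos : (0:ℝ) < qt := lt_of_lt_of_le one_pos hqt1
  have httpos : (0:ℝ) < tt := lt_of_lt_of_le one_pos htt1
  -- constant κ
  set κ : ℝ≥0∞ := ((2:ℝ≥0∞) ^ n) ^ (β⁻¹.toReal - 1) with hκdef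
  have h2n0 : ((2:ℝ≥0∞) ^ n) ≠ 0 := pow_ne_zero _ (by norm_num)
  have h2ntop : ((2:ℝ≥0∞) ^ n) ≠ ∞ := by
    exact ENNReal.pow_ne_top (by norm_num)
  have hκ0 : κ ≠ 0 := by
    rw [hκdef]
    simp only [ne_eq, ENNReal.rpow_eq_zero_iff, not_or, not_and]
    exact ⟨fun hc => absurd hc h2n0, fun hc => absurd hc h2ntop⟩
  have hκtop : κ ≠ ∞ := by
    rw [hκdef]
    simp only [ne_eq, ENNReal.rpow_eq_top_iff, not_or, not_and]
    exact ⟨fun hc => absurd hc h2n0, fun hc => absurd hc h2ntop⟩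
  -- Besicovitch constants
  obtain ⟨N, τ, hτ, hNsat⟩ := HasBesicovitchCovering.no_satelliteConfig (α := Fin n → ℝ)
  set D : ℝ≥0∞ := (N : ℝ≥0∞) ^ tt⁻¹ * κ⁻¹ * ENNReal.ofReal A with hDdef
  have hDtop : D ≠ ∞ := by
    rw [hDdef]
    exact ENNReal.mul_ne_top
      (ENNReal.mul_ne_top (ENNReal.rpow_ne_top_of_nonneg (by positivity) (ENNReal.natCast_ne_top N))
        (ENNReal.inv_ne_top.mpr hκ0)) ENNReal.ofReal_ne_top
  refine ⟨D.toReal + 1, by positivity, ?_⟩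
  have hDle : D ≤ ENNReal.ofReal (D.toReal + 1) := by
    conv_lhs => rw [← ENNReal.ofReal_toReal hDtop]
    exact ENNReal.ofReal_le_ofReal (by linarith)
  intro f hf l hl
  set fv := fun x => f x * v x with hfvdef
  set E := {x | ENNReal.ofReal l < maxOp 1 β (en f) x} with hEdef
  by_cases hνtop : lqn q univ (en fv) = ∞
  · rw [hνtop]
    have hmul : ENNReal.ofReal (D.toReal + 1) * (ENNReal.ofReal l)⁻¹ ≠ 0 := by
      apply mul_ne_zero
      · simp only [ne_eq, ENNReal.ofReal_eq_zero, not_le]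
        positivity
      · exact ENNReal.inv_ne_zero.mpr ENNReal.ofReal_ne_top
    rw [ENNReal.mul_top hmul]
    exact le_top
  -- main case
  set ν := volume.withDensity (fun y => en fv y ^ qt) with hνdef
  set μ := volume.withDensity (fun y => en v y ^ tt) with hμdef
  have hlqnuniv : lqn q univ (en fv) = (ν univ) ^ qt⁻¹ := by
    rw [hνdef, withDensity_apply _ MeasurableSet.univ]
    simp only [lqn, if_neg hqtop]
    rfl
  have hνU : ν univ ≠ ∞ := by
    intro hcon
    apply hνtop
    rw [hlqnuniv, hcon, ENNReal.top_rpow_of_pos (by positivity)]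
  set L := κ * ENNReal.ofReal l with hLdef
  have hofl0 : ENNReal.ofReal l ≠ 0 := by
    simp only [ne_eq, ENNReal.ofReal_eq_zero, not_le]; positivity
  have hL0 : L ≠ 0 := mul_ne_zero hκ0 hofl0
  have hLtop : L ≠ ∞ := ENNReal.mul_ne_top hκtop ENNReal.ofReal_ne_top
  set K := (L⁻¹ * ENNReal.ofReal A) ^ tt with hKdef
  set ρ := tt / qt with hρdef
  have hρ1 : 1 ≤ ρ := (one_le_div hqtpos).mpr hqtt
  -- the key pointwise selection
  have hkey : ∀ x ∈ E, ∃ r : ℝ, 0 < r ∧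
      μ (Metric.closedBall x r) ≤ K * ν (Metric.closedBall x r) ^ ρ := by
    intro x hx
    simp only [hEdef, mem_setOf_eq, maxOp, lt_iSup_iff, inv_one, ENNReal.toReal_one,
      lqn_one] at hx
    obtain ⟨c, h, hh, hxQ, hlt⟩ := hx
    refine ⟨2 * h, by linarith, ?_⟩
    have hsub : qcube c h ⊆ qcube x (2 * h) := by
      intro y hy j
      have h1 := hy j
      have h2 := hxQ j
      calc |y j - x j| ≤ |y j - c j| + |c j - x j| := by
            have heq : y j - x j = (y j - c j) + (c j - x j) := by ring
            rw [heq]; exact abs_add_le _ _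
        _ ≤ h + h := add_le_add h1 (by rwa [abs_sub_comm])
        _ = 2 * h := by ring
    have hvol : volume (qcube x (2 * h)) = (2:ℝ≥0∞) ^ n * volume (qcube c h) := by
      rw [volume_qcube, volume_qcube]
      have : ENNReal.ofReal (2 * (2 * h)) = 2 * ENNReal.ofReal (2 * h) := by
        rw [ENNReal.ofReal_mul (by norm_num : (0:ℝ) ≤ 2), ENNReal.ofReal_ofNat]
      rw [this, mul_pow]
    have hQ0 : volume (qcube c h) ≠ 0 := by
      rw [volume_qcube]
      exact pow_ne_zero _ (by simp only [ne_eq, ENNReal.ofReal_eq_zero, not_le]; linarith)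
    have hrpow : volume (qcube x (2 * h)) ^ (β⁻¹.toReal - 1) =
        κ * volume (qcube c h) ^ (β⁻¹.toReal - 1) := by
      rw [hvol, ENNReal.mul_rpow_of_ne_zero h2n0 hQ0]
    have hL' : L ≤ volume (qcube x (2 * h)) ^ (β⁻¹.toReal - 1) *
        ∫⁻ y in qcube x (2 * h), en f y := by
      rw [hrpow, hLdef]
      calc κ * ENNReal.ofReal l
          ≤ κ * (volume (qcube c h) ^ (β⁻¹.toReal - 1) * ∫⁻ y in qcube c h, en f y) :=
            mul_le_mul_right hlt.le _
        _ = (κ * volume (qcube c h) ^ (β⁻¹.toReal - 1)) * ∫⁻ y in qcube c h, en f y := by ring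
        _ ≤ (κ * volume (qcube c h) ^ (β⁻¹.toReal - 1)) * ∫⁻ y in qcube x (2 * h), en f y :=
            mul_le_mul_right (lintegral_mono_set hsub) _
    have hPC := percube hq hqtop hq' hv hvpos hA hf (by linarith : (0:ℝ) < 2 * h) hL'
    have hQ'meas := measurableSet_qcube x (show (0:ℝ) ≤ 2 * h by linarith)
    have hμQ : μ (qcube x (2 * h)) = (lqn t (qcube x (2 * h)) (en v)) ^ tt := by
      rw [hμdef, withDensity_apply _ hQ'meas]
      simp only [lqn, if_neg httop]
      rw [← ENNReal.rpow_mul, inv_mul_cancel₀ httpos.ne', ENNReal.rpow_one]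
    have hνQ : (lqn q (qcube x (2 * h)) (en fv)) ^ tt = ν (qcube x (2 * h)) ^ ρ := by
      rw [hνdef, withDensity_apply _ hQ'meas]
      simp only [lqn, if_neg hqtop]
      rw [← ENNReal.rpow_mul]
      congr 1
      rw [hρdef]
      field_simp
      exact div_self hqtpos.ne'
    have hQfin : lqn q (qcube x (2 * h)) (en fv) ≠ ∞ :=
      ne_top_of_le_ne_top hνtop (lqn_mono hqtop (subset_univ _) _)
    have step : lqn t (qcube x (2 * h)) (en v) ≤
        L⁻¹ * (ENNReal.ofReal A * lqn q (qcube x (2 * h)) (en fv)) := by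
      calc lqn t (qcube x (2 * h)) (en v)
          = L⁻¹ * (L * lqn t (qcube x (2 * h)) (en v)) := by
            rw [← mul_assoc, ENNReal.inv_mul_cancel hL0 hLtop, one_mul]
        _ ≤ L⁻¹ * (ENNReal.ofReal A * lqn q (qcube x (2 * h)) (en fv)) :=
            mul_le_mul_right hPC _
    rw [← qcube_eq_closedBall x (show (0:ℝ) ≤ 2 * h by linarith)]
    calc μ (qcube x (2 * h)) = (lqn t (qcube x (2 * h)) (en v)) ^ tt := hμQ
      _ ≤ (L⁻¹ * ENNReal.ofReal A * lqn q (qcube x (2 * h)) (en fv)) ^ tt := by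
          rw [mul_assoc]
          exact ENNReal.rpow_le_rpow step httpos.le
      _ = (L⁻¹ * ENNReal.ofReal A) ^ tt * (lqn q (qcube x (2 * h)) (en fv)) ^ tt := by
          rw [ENNReal.mul_rpow_of_ne_top
            (ENNReal.mul_ne_top (ENNReal.inv_ne_top.mpr hL0) ENNReal.ofReal_ne_top) hQfin]
      _ = K * ν (qcube x (2 * h)) ^ ρ := by rw [hνQ, hKdef]
  -- choose radii
  set rf : (Fin n → ℝ) → ℝ := fun x => if hx : x ∈ E then (hkey x hx).choose else 1 with hrfdef
  have hrf_pos : ∀ x, 0 < rf x := by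
    intro x
    by_cases hx : x ∈ E
    · simp only [hrfdef, dif_pos hx]; exact (hkey x hx).choose_spec.1
    · simp only [hrfdef, dif_neg hx]; norm_num
  have hrf_prop : ∀ x ∈ E,
      μ (Metric.closedBall x (rf x)) ≤ K * ν (Metric.closedBall x (rf x)) ^ ρ := by
    intro x hx
    simp only [hrfdef, dif_pos hx]
    exact (hkey x hx).choose_spec.2
  set s : ℕ → Set (Fin n → ℝ) := fun M => {x | x ∈ E ∧ rf x ≤ M} with hsdef
  have hsE : E = ⋃ M, s M := by
    apply Set.Subset.antisymm
    · intro x hx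
      obtain ⟨M, hM⟩ := exists_nat_ge (rf x)
      exact mem_iUnion.mpr ⟨M, hx, hM⟩
    · intro x hx
      obtain ⟨M, hM⟩ := mem_iUnion.mp hx
      exact hM.1
  have hsmono : Monotone s := by
    intro M M' hMM' x hx
    exact ⟨hx.1, le_trans hx.2 (by exact_mod_cast hMM')⟩
  -- the Besicovitch bound for each M
  have hbound : ∀ M : ℕ, μ (s M) ≤ (N : ℝ≥0∞) * (K * ν univ ^ ρ) := by
    intro M
    set pkg : Besicovitch.BallPackage (↥(s M)) (Fin n → ℝ) :=
      { c := Subtype.val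
        r := fun x => rf x.1
        rpos := fun x => hrf_pos x.1
        r_bound := M
        r_le := fun x => x.2.2 } with hpkg
    obtain ⟨U, hU, hU'⟩ := Besicovitch.exist_disjoint_covering_families hτ hNsat pkg
    have hcover : s M ⊆ ⋃ i : Fin N, ⋃ j ∈ U i, Metric.closedBall (pkg.c j) (pkg.r j) := by
      intro x hx
      have hx' : x ∈ ⋃ i : Fin N, ⋃ j ∈ U i, Metric.ball (pkg.c j) (pkg.r j) := by
        apply hU'
        rw [hpkg]
        exact (Subtype.range_val (s := s M)).symm ▸ hx
      obtain ⟨i, hi⟩ := mem_iUnion.mp hx'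
      obtain ⟨j, hj, hjx⟩ := mem_iUnion₂.mp hi
      exact mem_iUnion.mpr ⟨i, mem_iUnion₂.mpr ⟨j, hj, Metric.ball_subset_closedBall hjx⟩⟩
    have hfam : ∀ i : Fin N,
        μ (⋃ j ∈ U i, Metric.closedBall (pkg.c j) (pkg.r j)) ≤ K * ν univ ^ ρ := by
      intro i
      have hdisjsub : Pairwise (Function.onFun Disjoint <|
          fun k : ↥(U i) => Metric.closedBall (pkg.c k.1) (pkg.r k.1)) := by
        intro k k' hkk'
        exact hU i k.2 k'.2 (fun hh => hkk' (Subtype.ext hh))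
      have hcnt : (U i).Countable := by
        have hposall := MeasureTheory.Measure.countable_meas_pos_of_disjoint_iUnion
          (μ := (volume : Measure (Fin n → ℝ)))
          (fun k : ↥(U i) => measurableSet_closedBall) hdisjsub
        have hall : {k : ↥(U i) |
            0 < volume (Metric.closedBall (pkg.c k.1) (pkg.r k.1))} = univ := by
          ext k
          simp only [mem_setOf_eq, mem_univ, iff_true]
          exact Metric.measure_closedBall_pos _ _ (hrf_pos _)
        rw [hall, Set.countable_univ_iff] at hposall
        exact Set.countable_coe_iff.mp hposall
      calc μ (⋃ j ∈ U i, Metric.closedBall (pkg.c j) (pkg.r j))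
          ≤ ∑' j : ↥(U i), μ (Metric.closedBall (pkg.c j.1) (pkg.r j.1)) :=
            measure_biUnion_le μ hcnt _
        _ ≤ ∑' j : ↥(U i), K * ν (Metric.closedBall (pkg.c j.1) (pkg.r j.1)) ^ ρ :=
            ENNReal.tsum_le_tsum fun j => hrf_prop j.1.1 j.1.2.1
        _ = K * ∑' j : ↥(U i), ν (Metric.closedBall (pkg.c j.1) (pkg.r j.1)) ^ ρ :=
            ENNReal.tsum_mul_left
        _ ≤ K * (∑' j : ↥(U i), ν (Metric.closedBall (pkg.c j.1) (pkg.r j.1))) ^ ρ :=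
            mul_le_mul_right (tsum_rpow_le _ hρ1) _
        _ = K * ν (⋃ j ∈ U i, Metric.closedBall (pkg.c j) (pkg.r j)) ^ ρ := by
            rw [measure_biUnion hcnt (hU i) (fun j _ => measurableSet_closedBall)]
        _ ≤ K * ν univ ^ ρ :=
            mul_le_mul_right (ENNReal.rpow_le_rpow (measure_mono (subset_univ _))
              (by positivity)) _
    calc μ (s M) ≤ μ (⋃ i : Fin N, ⋃ j ∈ U i, Metric.closedBall (pkg.c j) (pkg.r j)) :=
          measure_mono hcover
      _ ≤ ∑ i : Fin N, μ (⋃ j ∈ U i, Metric.closedBall (pkg.c j) (pkg.r j)) :=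
          measure_iUnion_fintype_le μ _
      _ ≤ ∑ _i : Fin N, (K * ν univ ^ ρ) := Finset.sum_le_sum fun i _ => hfam i
      _ = (N : ℝ≥0∞) * (K * ν univ ^ ρ) := by
          rw [Finset.sum_const, Finset.card_univ, Fintype.card_fin, nsmul_eq_mul]
  have hμE : μ E ≤ (N : ℝ≥0∞) * (K * ν univ ^ ρ) := by
    rw [hsE, Directed.measure_iUnion (hsmono.directed_le)]
    exact iSup_le hbound
  -- final computation
  have hKtop : K ≠ ∞ := by
    rw [hKdef]
    exact ENNReal.rpow_ne_top_of_nonneg httpos.le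
      (ENNReal.mul_ne_top (ENNReal.inv_ne_top.mpr hL0) ENNReal.ofReal_ne_top)
  have hfinal1 : lqn t E (en v) ≤ (μ E) ^ tt⁻¹ := by
    simp only [lqn, if_neg httop]
    exact ENNReal.rpow_le_rpow (withDensity_apply_le _ _) (by positivity)
  calc lqn t E (en v) ≤ (μ E) ^ tt⁻¹ := hfinal1
    _ ≤ ((N : ℝ≥0∞) * (K * ν univ ^ ρ)) ^ tt⁻¹ :=
        ENNReal.rpow_le_rpow hμE (by positivity)
    _ = (N : ℝ≥0∞) ^ tt⁻¹ * (K ^ tt⁻¹ * (ν univ ^ ρ) ^ tt⁻¹) := by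
        rw [ENNReal.mul_rpow_of_ne_top (ENNReal.natCast_ne_top N)
          (ENNReal.mul_ne_top hKtop (ENNReal.rpow_ne_top_of_nonneg (by positivity) hνU)),
          ENNReal.mul_rpow_of_ne_top hKtop
          (ENNReal.rpow_ne_top_of_nonneg (by positivity) hνU)]
    _ = (N : ℝ≥0∞) ^ tt⁻¹ * ((L⁻¹ * ENNReal.ofReal A) * (ν univ) ^ qt⁻¹) := by
        congr 2
        · rw [hKdef, ← ENNReal.rpow_mul, mul_inv_cancel₀ httpos.ne', ENNReal.rpow_one]
        · rw [← ENNReal.rpow_mul]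
          congr 1
          rw [hρdef]
          field_simp
    _ = D * (ENNReal.ofReal l)⁻¹ * lqn q univ (en fv) := by
        rw [hlqnuniv, hDdef, hLdef, ENNReal.mul_inv (Or.inl hκ0) (Or.inl hκtop)]
        ring
    _ ≤ ENNReal.ofReal (D.toReal + 1) * (ENNReal.ofReal l)⁻¹ * lqn q univ (en fv) := by
        exact mul_le_mul_left (mul_le_mul_left hDle _) _


end RN
end
end

section
/- Let (X,d,μ) be a space of homogeneous type such that μ(X) = ∞, μ({x}) = 0 for all x, and B(x,R)∖B(x,r) ≠ ∅ whenever 0 < r < R < ∞. Then there exist constants C̃_μ > 0 and δ_μ > 0 such that for all balls B₂ ⊆ B₁, μ(B₁)/μ(B₂) ≥ C̃_μ (r(B₁)/r(B₂))^{δ_μ} (reverse doubling). -/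
open MeasureTheory ENNReal Set Filter

noncomputable section

namespace HT

variable {X : Type*} [MeasurableSpace X]

/-- Ball of a quasi-metric. -/
def ball (d : X → X → ℝ) (x : X) (r : ℝ) : Set X := {y | d x y < r}

/-- `L^q` "norm" of an `ℝ≥0∞`-valued function on a set. -/
def lqn (μ : Measure X) (q : ℝ≥0∞) (A : Set X) (g : X → ℝ≥0∞) : ℝ≥0∞ :=
  if q = ∞ then essSup (A.indicator g) μ
  else (∫⁻ x in A, g x ^ q.toReal ∂μ) ^ q.toReal⁻¹

/-- Fractional maximal operator `M_{q,β}`. -/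
def maxOp (d : X → X → ℝ) (μ : Measure X) (q β : ℝ≥0∞) (g : X → ℝ≥0∞) (x : X) : ℝ≥0∞ :=
  ⨆ (z : X) (r : ℝ) (_ : 0 < r) (_ : x ∈ ball d z r),
    μ (ball d z r) ^ (β⁻¹.toReal - q⁻¹.toReal) * lqn μ q (ball d z r) g

/-- The quantity `_r‖g‖_{q,p,α}`. -/
def blockNorm (d : X → X → ℝ) (μ : Measure X) (q p α : ℝ≥0∞) (g : X → ℝ≥0∞) (r : ℝ) :
    ℝ≥0∞ :=
  if p = ∞ then
    essSup (fun y => μ (ball d y r) ^ (α⁻¹.toReal - q⁻¹.toReal) * lqn μ q (ball d y r) g) μ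
  else
    (∫⁻ y, (μ (ball d y r) ^ (α⁻¹.toReal - p⁻¹.toReal - q⁻¹.toReal) *
      lqn μ q (ball d y r) g) ^ p.toReal ∂μ) ^ p.toReal⁻¹

/-- The `(L^q, L^p)^α(X)` norm. -/
def amal (d : X → X → ℝ) (μ : Measure X) (q p α : ℝ≥0∞) (g : X → ℝ≥0∞) : ℝ≥0∞ :=
  ⨆ (r : ℝ) (_ : 0 < r), blockNorm d μ q p α g r

/-- The fractional integral `I_γ`. -/
def ifrac (d : X → X → ℝ) (μ : Measure X) (γ : ℝ) (g : X → ℝ≥0∞) (x : X) : ℝ≥0∞ :=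
  ∫⁻ y, g y / μ (ball d x (d x y)) ^ (1 - γ) ∂μ

/-- Normalized Luxemburg norm, for an `ℝ≥0∞`-valued Young function `Ψ`. -/
def luxN (μ : Measure X) (Ψ : ℝ → ℝ≥0∞) (A : Set X) (g : X → ℝ≥0∞) : ℝ≥0∞ :=
  sInf {a : ℝ≥0∞ | 0 < a ∧ ∫⁻ x in A, Ψ ((g x / a).toReal) ∂μ ≤ μ A}

/-- Young conjugate, `ℝ≥0∞`-valued. -/
def conjE (Φ : ℝ → ℝ) (u : ℝ) : ℝ≥0∞ :=
  ⨆ (t : ℝ) (_ : 0 ≤ t), ENNReal.ofReal (t * u - Φ t)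

/-- Pointwise extended norm of a real-valued function. -/
def en (f : X → ℝ) : X → ℝ≥0∞ := fun x => (‖f x‖₊ : ℝ≥0∞)

set_option maxHeartbeats 1000000 in
/-- Reverse doubling: if `(X,d,μ)` is a space of homogeneous type with
`μ(X) = ∞`, `μ({x}) = 0`, and nonempty annuli, then there are `C̃_μ > 0`, `δ_μ > 0` with
`μ(B₁)/μ(B₂) ≥ C̃_μ (r(B₁)/r(B₂))^{δ_μ}` for all balls `B₂ ⊆ B₁`. -/
theorem reverse_doubling
    (d : X → X → ℝ) (μ : Measure X) (κ : ℝ) (hκ : 1 ≤ κ)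
    (hd0 : ∀ x, d x x = 0) (hdpos : ∀ x y, 0 ≤ d x y) (hdsym : ∀ x y, d x y = d y x)
    (hdtri : ∀ x y z, d x z ≤ κ * (d x y + d y z))
    (hballm : ∀ x r, MeasurableSet (ball d x r))
    (Cμ : ℝ) (hCμ : 1 ≤ Cμ)
    (hdoub : ∀ x r, 0 < r → μ (ball d x (2 * r)) ≤ ENNReal.ofReal Cμ * μ (ball d x r))
    (hfin : ∀ x r, 0 < r → μ (ball d x r) < ∞)
    (hXinf : μ univ = ∞) (hpt : ∀ x : X, μ {x} = 0)
    (hann : ∀ (x : X) (r R : ℝ), 0 < r → r < R → (ball d x R \ ball d x r).Nonempty) :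
    ∃ Ctil > (0 : ℝ), ∃ δ > (0 : ℝ),
      ∀ x₁ x₂ r₁ r₂, 0 < r₂ → r₂ ≤ r₁ → ball d x₂ r₂ ⊆ ball d x₁ r₁ →
        ENNReal.ofReal (Ctil * (r₁ / r₂) ^ δ) * μ (ball d x₂ r₂) ≤ μ (ball d x₁ r₁) := by
  classical
  have hκ0 : (0:ℝ) < κ := lt_of_lt_of_le one_pos hκ
  have hCμ0 : (0:ℝ) < Cμ := lt_of_lt_of_le one_pos hCμ
  -- monotonicity of balls in the radius
  have hmono : ∀ (x : X) {r s : ℝ}, r ≤ s → ball d x r ⊆ ball d x s := by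
    intro x r s h y hy; exact lt_of_lt_of_le hy h
  -- iterated doubling
  have hdoubn : ∀ (n : ℕ) (x : X) (r : ℝ), 0 < r →
      μ (ball d x (2 ^ n * r)) ≤ (ENNReal.ofReal Cμ) ^ n * μ (ball d x r) := by
    intro n
    induction n with
    | zero => intro x r hr; simp
    | succ n ih =>
      intro x r hr
      have h1 : (2:ℝ) ^ (n+1) * r = 2 * (2 ^ n * r) := by ring
      have h2 : (0:ℝ) < 2 ^ n * r := by positivity
      calc μ (ball d x (2 ^ (n+1) * r)) = μ (ball d x (2 * (2 ^ n * r))) := by rw [h1]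
        _ ≤ ENNReal.ofReal Cμ * μ (ball d x (2 ^ n * r)) := hdoub x _ h2
        _ ≤ ENNReal.ofReal Cμ * ((ENNReal.ofReal Cμ) ^ n * μ (ball d x r)) :=
            mul_le_mul_right (ih x r hr) _
        _ = (ENNReal.ofReal Cμ) ^ (n+1) * μ (ball d x r) := by ring
  -- positivity of measures of balls
  have hpos : ∀ (x : X) (r : ℝ), 0 < r → 0 < μ (ball d x r) := by
    intro x r hr
    by_contra h
    push_neg at h
    have h0 : μ (ball d x r) = 0 := le_antisymm h zero_le
    have hcover : (univ : Set X) ⊆ ⋃ n : ℕ, ball d x (2 ^ n * r) := by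
      intro y _
      obtain ⟨n, hn⟩ := pow_unbounded_of_one_lt (d x y / r) (one_lt_two (α := ℝ))
      refine mem_iUnion.2 ⟨n, ?_⟩
      have : d x y = (d x y / r) * r := by field_simp
      have hlt : d x y < 2 ^ n * r := by
        rw [this]; exact mul_lt_mul_of_pos_right hn hr
      exact hlt
    have hzero : ∀ n : ℕ, μ (ball d x (2 ^ n * r)) = 0 := by
      intro n
      have := hdoubn n x r hr
      rw [h0, mul_zero] at this
      exact le_antisymm this zero_le
    have : μ univ ≤ ∑' n : ℕ, μ (ball d x (2 ^ n * r)) :=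
      le_trans (measure_mono hcover) (measure_iUnion_le _)
    rw [hXinf] at this
    simp [hzero] at this
  -- real-valued comparison lemma
  have hcompR : ∀ (n : ℕ) (x : X) (r : ℝ) (S : Set X), 0 < r → S ⊆ ball d x (2 ^ n * r) →
      (μ S).toReal ≤ Cμ ^ n * (μ (ball d x r)).toReal := by
    intro n x r S hr hS
    have h1 : μ S ≤ (ENNReal.ofReal Cμ) ^ n * μ (ball d x r) :=
      le_trans (measure_mono hS) (hdoubn n x r hr)
    have hfin' : (ENNReal.ofReal Cμ) ^ n * μ (ball d x r) ≠ ∞ :=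
      ENNReal.mul_ne_top (by simp [ENNReal.pow_ne_top]) (hfin x r hr).ne
    have := ENNReal.toReal_mono hfin' h1
    rwa [ENNReal.toReal_mul, ENNReal.toReal_pow, ENNReal.toReal_ofReal hCμ0.le] at this
  -- choose exponents for the doubling constant
  obtain ⟨m, hm⟩ := pow_unbounded_of_one_lt (9 * κ ^ 3) (one_lt_two (α := ℝ))
  obtain ⟨k, hk⟩ := pow_unbounded_of_one_lt (3 * κ ^ 2) (one_lt_two (α := ℝ))
  set K : ℝ := Cμ ^ m with hKdef
  have hK1 : (1:ℝ) ≤ K := one_le_pow₀ hCμ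
  have hK0 : (0:ℝ) < K := lt_of_lt_of_le one_pos hK1
  set a : ℝ := K / (K + 1) with hadef
  have ha0 : 0 < a := by positivity
  have ha1 : a < 1 := by rw [hadef, div_lt_one (by positivity)]; linarith
  set Lam : ℝ := 5 * κ ^ 2 with hLamdef
  have hLam1 : (1:ℝ) < Lam := by nlinarith
  have hLam0 : (0:ℝ) < Lam := lt_trans one_pos hLam1
  -- the key annulus step
  have hstep : ∀ (x : X) (r : ℝ), 0 < r →
      (μ (ball d x r)).toReal ≤ a * (μ (ball d x (Lam * r))).toReal := by
    intro x r hr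
    obtain ⟨y, hy⟩ := hann x (2 * κ * r) (4 * κ * r) (by positivity) (by nlinarith)
    have hy1 : d x y < 4 * κ * r := hy.1
    have hy2 : 2 * κ * r ≤ d x y := not_lt.mp hy.2
    have hdisj : Disjoint (ball d x r) (ball d y r) := by
      rw [Set.disjoint_left]
      intro z hz1 hz2
      have h1 : d x z < r := hz1
      have h2 : d y z < r := hz2
      have h3 : d x y ≤ κ * (d x z + d z y) := hdtri x z y
      have h4 : d z y = d y z := hdsym z y
      nlinarith
    have hsub1 : ball d x r ⊆ ball d x (Lam * r) := hmono x (by nlinarith)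
    have hsub2 : ball d y r ⊆ ball d x (Lam * r) := by
      intro z hz
      have h1 : d y z < r := hz
      have h2 : d x z ≤ κ * (d x y + d y z) := hdtri x y z
      show d x z < Lam * r
      rw [hLamdef]; nlinarith
    have hsub3 : ball d x (Lam * r) ⊆ ball d y (2 ^ m * r) := by
      intro z hz
      have h1 : d x z < Lam * r := hz
      have h2 : d y z ≤ κ * (d y x + d x z) := hdtri y x z
      have h3 : d y x = d x y := hdsym y x
      show d y z < 2 ^ m * r
      have h4 : d y z < 9 * κ ^ 3 * r := by
        rw [hLamdef] at h1
        have b1 : d y x + d x z < 4 * κ * r + 5 * κ ^ 2 * r := by rw [h3]; linarith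
        have b2 : κ * (d y x + d x z) < κ * (4 * κ * r + 5 * κ ^ 2 * r) :=
          mul_lt_mul_of_pos_left b1 hκ0
        have b3 : κ * (4 * κ * r + 5 * κ ^ 2 * r) ≤ 9 * κ ^ 3 * r := by
          nlinarith [mul_nonneg (mul_nonneg (sq_nonneg κ) hr.le) (sub_nonneg.mpr hκ)]
        linarith
      have h5 : 9 * κ ^ 3 * r ≤ 2 ^ m * r := mul_le_mul_of_nonneg_right hm.le hr.le
      linarith
    have hLr : (0:ℝ) < Lam * r := by positivity
    have hA : μ (ball d x r) + μ (ball d y r) ≤ μ (ball d x (Lam * r)) := by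
      rw [← measure_union hdisj (hballm y r)]
      exact measure_mono (union_subset hsub1 hsub2)
    have hAr : (μ (ball d x r)).toReal + (μ (ball d y r)).toReal ≤
        (μ (ball d x (Lam * r))).toReal := by
      have := ENNReal.toReal_mono (hfin x _ hLr).ne hA
      rwa [ENNReal.toReal_add (hfin x r hr).ne (hfin y r hr).ne] at this
    have hB : (μ (ball d x (Lam * r))).toReal ≤ K * (μ (ball d y r)).toReal :=
      hcompR m y r _ hr hsub3
    have hA0 : 0 ≤ (μ (ball d x r)).toReal := ENNReal.toReal_nonneg
    have hB0 : 0 ≤ (μ (ball d y r)).toReal := ENNReal.toReal_nonneg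
    have hM0 : 0 ≤ (μ (ball d x (Lam * r))).toReal := ENNReal.toReal_nonneg
    rw [hadef, div_mul_eq_mul_div, le_div_iff₀ (by positivity)]
    nlinarith
  -- iterate the annulus step
  have hiter : ∀ (n : ℕ) (x : X) (r : ℝ), 0 < r →
      (μ (ball d x r)).toReal ≤ a ^ n * (μ (ball d x (Lam ^ n * r))).toReal := by
    intro n
    induction n with
    | zero => intro x r hr; simp
    | succ n ih =>
      intro x r hr
      have h2 : (0:ℝ) < Lam ^ n * r := by positivity
      calc (μ (ball d x r)).toReal ≤ a ^ n * (μ (ball d x (Lam ^ n * r))).toReal := ih x r hr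
        _ ≤ a ^ n * (a * (μ (ball d x (Lam * (Lam ^ n * r)))).toReal) :=
            mul_le_mul_of_nonneg_left (hstep x _ h2) (by positivity)
        _ = a ^ (n+1) * (μ (ball d x (Lam ^ (n+1) * r))).toReal := by
            rw [show Lam * (Lam ^ n * r) = Lam ^ (n+1) * r by ring]; ring
  -- the exponent
  set δ : ℝ := Real.logb Lam a⁻¹ with hδdef
  have hainv1 : (1:ℝ) < a⁻¹ := (one_lt_inv₀ ha0).mpr ha1
  have hδ0 : 0 < δ := Real.logb_pos hLam1 hainv1
  have haLam : Lam ^ δ = a⁻¹ := Real.rpow_logb hLam0 hLam1.ne' (by positivity)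
  refine ⟨a / Cμ ^ k, by positivity, δ, hδ0, ?_⟩
  intro x₁ x₂ r₁ r₂ hr₂ hr₂₁ hsubB
  have hr₁ : 0 < r₁ := lt_of_lt_of_le hr₂ hr₂₁
  have hx₂ : d x₁ x₂ < r₁ := hsubB (show d x₂ x₂ < r₂ by rw [hd0]; exact hr₂)
  set q : ℝ := 2 * κ * r₁ / r₂ with hqdef
  have hq0 : 0 < q := by positivity
  have hq1 : 1 ≤ q := by
    rw [hqdef, le_div_iff₀ hr₂]; nlinarith
  obtain ⟨n, hn1, hn2⟩ : ∃ n : ℕ, Lam ^ n ≤ q ∧ q < Lam ^ (n + 1) := by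
    refine ⟨⌊Real.logb Lam q⌋₊, ?_, ?_⟩
    · have hlogb0 : 0 ≤ Real.logb Lam q := Real.logb_nonneg hLam1 hq1
      calc Lam ^ ⌊Real.logb Lam q⌋₊ = Lam ^ ((⌊Real.logb Lam q⌋₊ : ℝ)) :=
            (Real.rpow_natCast _ _).symm
        _ ≤ Lam ^ Real.logb Lam q :=
            Real.rpow_le_rpow_of_exponent_le hLam1.le (Nat.floor_le hlogb0)
        _ = q := Real.rpow_logb hLam0 hLam1.ne' hq0
    · calc q = Lam ^ Real.logb Lam q := (Real.rpow_logb hLam0 hLam1.ne' hq0).symm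
        _ < Lam ^ ((⌊Real.logb Lam q⌋₊ + 1 : ℕ) : ℝ) := by
            apply Real.rpow_lt_rpow_of_exponent_lt hLam1
            push_cast
            exact Nat.lt_floor_add_one _
        _ = Lam ^ (⌊Real.logb Lam q⌋₊ + 1) := Real.rpow_natCast _ _
  -- the chain of inequalities
  have h1 : (μ (ball d x₂ r₂)).toReal ≤ a ^ n * (μ (ball d x₂ (Lam ^ n * r₂))).toReal :=
    hiter n x₂ r₂ hr₂
  have hqr : q * r₂ = 2 * κ * r₁ := by rw [hqdef]; field_simp
  have h2 : (μ (ball d x₂ (Lam ^ n * r₂))).toReal ≤ (μ (ball d x₂ (2 * κ * r₁))).toReal := by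
    apply ENNReal.toReal_mono (hfin x₂ _ (by positivity)).ne
    apply measure_mono (hmono x₂ _)
    calc Lam ^ n * r₂ ≤ q * r₂ := mul_le_mul_of_nonneg_right hn1 hr₂.le
      _ = 2 * κ * r₁ := hqr
  have h3 : (μ (ball d x₂ (2 * κ * r₁))).toReal ≤ Cμ ^ k * (μ (ball d x₁ r₁)).toReal := by
    apply hcompR k x₁ r₁ _ hr₁
    intro z hz
    have h1' : d x₂ z < 2 * κ * r₁ := hz
    have h2' : d x₁ z ≤ κ * (d x₁ x₂ + d x₂ z) := hdtri x₁ x₂ z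
    show d x₁ z < 2 ^ k * r₁
    have h4 : d x₁ z < 3 * κ ^ 2 * r₁ := by
      have b1 : d x₁ x₂ + d x₂ z < r₁ + 2 * κ * r₁ := add_lt_add hx₂ h1'
      have b2 : κ * (d x₁ x₂ + d x₂ z) < κ * (r₁ + 2 * κ * r₁) :=
        mul_lt_mul_of_pos_left b1 hκ0
      have b3 : κ * (r₁ + 2 * κ * r₁) ≤ 3 * κ ^ 2 * r₁ := by
        nlinarith [mul_nonneg (mul_nonneg hκ0.le hr₁.le) (sub_nonneg.mpr hκ)]
      linarith
    have h5 : 3 * κ ^ 2 * r₁ ≤ 2 ^ k * r₁ := mul_le_mul_of_nonneg_right hk.le hr₁.le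
    linarith
  have hchain : (μ (ball d x₂ r₂)).toReal ≤
      a ^ n * Cμ ^ k * (μ (ball d x₁ r₁)).toReal := by
    calc (μ (ball d x₂ r₂)).toReal
        ≤ a ^ n * (μ (ball d x₂ (Lam ^ n * r₂))).toReal := h1
      _ ≤ a ^ n * (μ (ball d x₂ (2 * κ * r₁))).toReal :=
          mul_le_mul_of_nonneg_left h2 (by positivity)
      _ ≤ a ^ n * (Cμ ^ k * (μ (ball d x₁ r₁)).toReal) :=
          mul_le_mul_of_nonneg_left h3 (by positivity)
      _ = a ^ n * Cμ ^ k * (μ (ball d x₁ r₁)).toReal := by ring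
  -- the key power estimate
  have hrr : r₁ / r₂ ≤ Lam ^ (n + 1) := by
    have : r₁ / r₂ ≤ q := by
      rw [hqdef]
      exact (div_le_div_iff_of_pos_right hr₂).mpr (by nlinarith)
    linarith
  have hpow : (r₁ / r₂) ^ δ ≤ (a⁻¹) ^ (n + 1) := by
    have e1 : ((Lam ^ (n+1) : ℝ)) ^ δ = (Lam ^ δ) ^ (n+1) := by
      rw [← Real.rpow_natCast Lam (n+1), ← Real.rpow_mul hLam0.le, mul_comm,
        Real.rpow_mul hLam0.le, Real.rpow_natCast]
    calc (r₁ / r₂) ^ δ ≤ ((Lam ^ (n+1) : ℝ)) ^ δ :=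
          Real.rpow_le_rpow (by positivity) hrr hδ0.le
      _ = (Lam ^ δ) ^ (n+1) := e1
      _ = (a⁻¹) ^ (n+1) := by rw [haLam]
  -- combine
  have hkey : a / Cμ ^ k * (r₁ / r₂) ^ δ * (a ^ n * Cμ ^ k) ≤ 1 := by
    have h6 : a / Cμ ^ k * (r₁ / r₂) ^ δ * (a ^ n * Cμ ^ k) = a ^ (n+1) * (r₁ / r₂) ^ δ := by
      field_simp; ring
    rw [h6]
    calc a ^ (n+1) * (r₁ / r₂) ^ δ ≤ a ^ (n+1) * (a⁻¹) ^ (n+1) :=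
          mul_le_mul_of_nonneg_left hpow (by positivity)
      _ = 1 := by rw [← mul_pow, mul_inv_cancel₀ ha0.ne', one_pow]
  have hreal : a / Cμ ^ k * (r₁ / r₂) ^ δ * (μ (ball d x₂ r₂)).toReal ≤
      (μ (ball d x₁ r₁)).toReal := by
    have hc0 : 0 ≤ a / Cμ ^ k * (r₁ / r₂) ^ δ := by positivity
    calc a / Cμ ^ k * (r₁ / r₂) ^ δ * (μ (ball d x₂ r₂)).toReal
        ≤ a / Cμ ^ k * (r₁ / r₂) ^ δ * (a ^ n * Cμ ^ k * (μ (ball d x₁ r₁)).toReal) :=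
          mul_le_mul_of_nonneg_left hchain hc0
      _ = a / Cμ ^ k * (r₁ / r₂) ^ δ * (a ^ n * Cμ ^ k) * (μ (ball d x₁ r₁)).toReal := by
          ring
      _ ≤ 1 * (μ (ball d x₁ r₁)).toReal :=
          mul_le_mul_of_nonneg_right hkey ENNReal.toReal_nonneg
      _ = (μ (ball d x₁ r₁)).toReal := one_mul _
  rw [← ENNReal.ofReal_toReal (hfin x₂ r₂ hr₂).ne, ← ENNReal.ofReal_toReal (hfin x₁ r₁ hr₁).ne,
    ← ENNReal.ofReal_mul (by positivity)]
  exact ENNReal.ofReal_le_ofReal hreal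

end HT
end
end

section
/- Let (X,d,μ) be a space of homogeneous type, 1 ≤ q ≤ α ≤ β ≤ ∞ with 1/s = 1/α − 1/β, and 1 ≤ u ≤ s ≤ v ≤ ∞. Then there is a constant D such that for every μ-measurable function f on X, ‖f‖_{q,v,α} ≤ D ‖M_{q,β} f‖_{u,v,s}. -/
open MeasureTheory ENNReal Set Filter

noncomputable section

namespace HT

variable {X : Type*} [MeasurableSpace X]

/-- Lower bound for `lqn` by a constant lower bound on the set. -/
lemma lqn_const_ge {X : Type*} [MeasurableSpace X] (μ : Measure X) (u : ℝ≥0∞) (hu : 1 ≤ u)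
    (A : Set X) (hA : MeasurableSet A) (hA0 : μ A ≠ 0) (c : ℝ≥0∞) (g : X → ℝ≥0∞)
    (hg : ∀ x ∈ A, c ≤ g x) : c * μ A ^ u⁻¹.toReal ≤ lqn μ u A g := by
  rcases eq_or_ne u ∞ with hui | hui
  · rw [lqn, if_pos hui, hui]
    simp only [ENNReal.inv_top, ENNReal.toReal_zero, ENNReal.rpow_zero, mul_one]
    rw [essSup_indicator_eq_essSup_restrict hA]
    have hres : (μ.restrict A) ≠ 0 := by simpa [Measure.restrict_eq_zero] using hA0
    calc c = essSup (fun _ : X => c) (μ.restrict A) := (essSup_const _ hres).symm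
      _ ≤ essSup g (μ.restrict A) := essSup_mono_ae (ae_restrict_of_forall_mem hA hg)
  · rw [lqn, if_neg hui]
    have ht : 0 < u.toReal := ENNReal.toReal_pos (by intro h; rw [h] at hu; simp at hu) hui
    have h1 : (∫⁻ x in A, (fun _ : X => c) x ^ u.toReal ∂μ) ≤ ∫⁻ x in A, g x ^ u.toReal ∂μ := by
      refine lintegral_mono_ae (ae_restrict_of_forall_mem hA fun x hx => ?_)
      exact ENNReal.rpow_le_rpow (hg x hx) ht.le
    have h2 : (∫⁻ _ in A, c ^ u.toReal ∂μ) = c ^ u.toReal * μ A := by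
      rw [setLIntegral_const]
    calc c * μ A ^ u⁻¹.toReal = (c ^ u.toReal * μ A) ^ u.toReal⁻¹ := by
          rw [ENNReal.mul_rpow_of_nonneg _ _ (by positivity), ← ENNReal.rpow_mul,
            mul_inv_cancel₀ ht.ne', ENNReal.rpow_one, ENNReal.toReal_inv]
      _ ≤ (∫⁻ x in A, g x ^ u.toReal ∂μ) ^ u.toReal⁻¹ := by
          rw [← h2]; exact ENNReal.rpow_le_rpow h1 (by positivity)

/-- Positivity of measures of balls under doubling and infinite total measure. -/
lemma ball_pos {X : Type*} [MeasurableSpace X] (d : X → X → ℝ) (μ : Measure X)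
    (Cμ : ℝ)
    (hdoub : ∀ x r, 0 < r → μ (ball d x (2 * r)) ≤ ENNReal.ofReal Cμ * μ (ball d x r))
    (hXinf : μ univ = ∞) (x : X) (r : ℝ) (hr : 0 < r) : μ (ball d x r) ≠ 0 := by
  intro h0
  have hz : ∀ n : ℕ, μ (ball d x (2 ^ n * r)) = 0 := by
    intro n
    induction n with
    | zero => simpa using h0
    | succ n ih =>
        have h2 : (2 : ℝ) ^ (n + 1) * r = 2 * (2 ^ n * r) := by ring
        have := hdoub x (2 ^ n * r) (by positivity)
        rw [ih, mul_zero] at this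
        rw [h2]
        exact le_antisymm this zero_le
  have hsub : (univ : Set X) ⊆ ⋃ n : ℕ, ball d x (2 ^ n * r) := by
    intro y _
    obtain ⟨n, hn⟩ := pow_unbounded_of_one_lt (d x y / r) one_lt_two
    exact mem_iUnion.2 ⟨n, by simp only [ball, mem_setOf_eq]; exact (div_lt_iff₀ hr).mp hn⟩
  have : μ univ ≤ ∑' n : ℕ, μ (ball d x (2 ^ n * r)) :=
    le_trans (measure_mono hsub) (measure_iUnion_le _)
  rw [hXinf] at this
  simp [hz] at this

/-- (Theorem: reverse control by the maximal operator.) If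
`1 ≤ q ≤ α ≤ β ≤ ∞`, `1/s = 1/α − 1/β`, `1 ≤ u ≤ s ≤ v ≤ ∞`, then
`‖f‖_{q,v,α} ≤ D ‖M_{q,β}f‖_{u,v,s}` for all measurable `f`. -/
theorem amalgam_le_maxOp
    (d : X → X → ℝ) (μ : Measure X) (κ : ℝ) (hκ : 1 ≤ κ)
    (hd0 : ∀ x, d x x = 0) (hdpos : ∀ x y, 0 ≤ d x y) (hdsym : ∀ x y, d x y = d y x)
    (hdtri : ∀ x y z, d x z ≤ κ * (d x y + d y z))
    (hballm : ∀ x r, MeasurableSet (ball d x r))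
    (Cμ : ℝ) (hCμ : 1 ≤ Cμ)
    (hdoub : ∀ x r, 0 < r → μ (ball d x (2 * r)) ≤ ENNReal.ofReal Cμ * μ (ball d x r))
    (hfin : ∀ x r, 0 < r → μ (ball d x r) < ∞)
    (hXinf : μ univ = ∞) (hpt : ∀ x : X, μ {x} = 0)
    (hann : ∀ (x : X) (r R : ℝ), 0 < r → r < R → (ball d x R \ ball d x r).Nonempty)
    (q α β s u v : ℝ≥0∞) (hq : 1 ≤ q) (hqα : q ≤ α) (hαβ : α ≤ β)
    (hs : s⁻¹ = α⁻¹ - β⁻¹) (hu : 1 ≤ u) (hus : u ≤ s) (hsv : s ≤ v) :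
    ∃ D > (0 : ℝ), ∀ f : X → ℝ, Measurable f →
      amal d μ q v α (en f) ≤ ENNReal.ofReal D * amal d μ u v s (maxOp d μ q β (en f)) := by
  have hα1 : (1 : ℝ≥0∞) ≤ α := le_trans hq hqα
  have hαinv : α⁻¹ ≠ ∞ := by
    intro h
    have := ENNReal.inv_le_one.mpr hα1
    rw [h] at this; simp at this
  have hba : β⁻¹ ≤ α⁻¹ := ENNReal.inv_le_inv.mpr hαβ
  have habs : s⁻¹.toReal + β⁻¹.toReal = α⁻¹.toReal := by
    rw [hs, ENNReal.toReal_sub_of_le hba hαinv]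
    have hbfin : β⁻¹ ≠ ∞ := ne_top_of_le_ne_top hαinv hba
    rw [sub_add_cancel]
  refine ⟨1, one_pos, fun f hf => ?_⟩
  rw [ENNReal.ofReal_one, one_mul]
  -- the key pointwise inequality between block-norm integrands
  have key : ∀ (w : ℝ) (y : X) (r : ℝ), 0 < r →
      μ (ball d y r) ^ (α⁻¹.toReal - w - q⁻¹.toReal) * lqn μ q (ball d y r) (en f) ≤
      μ (ball d y r) ^ (s⁻¹.toReal - w - u⁻¹.toReal) *
        lqn μ u (ball d y r) (maxOp d μ q β (en f)) := by
    intro w y r hr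
    set B := ball d y r with hB
    set m := μ B with hm
    have hm0 : m ≠ 0 := ball_pos d μ Cμ hdoub hXinf y r hr
    have hmt : m ≠ ∞ := (hfin y r hr).ne
    set L := lqn μ q B (en f) with hL
    set c := m ^ (β⁻¹.toReal - q⁻¹.toReal) * L with hc
    have hAx : ∀ x ∈ B, c ≤ maxOp d μ q β (en f) x := by
      intro x hx
      rw [maxOp]
      exact le_iSup_of_le y (le_iSup_of_le r (le_iSup_of_le hr (le_iSup_of_le hx le_rfl)))
    have h2 : c * m ^ u⁻¹.toReal ≤ lqn μ u B (maxOp d μ q β (en f)) :=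
      lqn_const_ge μ u hu B (hballm y r) hm0 c _ hAx
    calc m ^ (α⁻¹.toReal - w - q⁻¹.toReal) * L
        = m ^ (s⁻¹.toReal - w - u⁻¹.toReal) * (c * m ^ u⁻¹.toReal) := by
          rw [hc]
          rw [show m ^ (s⁻¹.toReal - w - u⁻¹.toReal) * (m ^ (β⁻¹.toReal - q⁻¹.toReal) * L *
              m ^ u⁻¹.toReal) = m ^ (s⁻¹.toReal - w - u⁻¹.toReal) * m ^ u⁻¹.toReal *
              m ^ (β⁻¹.toReal - q⁻¹.toReal) * L by ring]
          rw [← ENNReal.rpow_add _ _ hm0 hmt, ← ENNReal.rpow_add _ _ hm0 hmt]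
          congr 2
          rw [← habs]; ring
      _ ≤ m ^ (s⁻¹.toReal - w - u⁻¹.toReal) * lqn μ u B (maxOp d μ q β (en f)) :=
          mul_le_mul_right h2 _
  -- comparison of block norms
  have hblock : ∀ r : ℝ, 0 < r →
      blockNorm d μ q v α (en f) r ≤ blockNorm d μ u v s (maxOp d μ q β (en f)) r := by
    intro r hr
    rcases eq_or_ne v ∞ with hvi | hvi
    · rw [blockNorm, blockNorm, if_pos hvi, if_pos hvi]
      refine essSup_mono_ae (Eventually.of_forall fun y => ?_)
      have := key 0 y r hr
      simpa using this
    · rw [blockNorm, blockNorm, if_neg hvi, if_neg hvi]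
      refine ENNReal.rpow_le_rpow (lintegral_mono fun y => ?_) (by positivity)
      exact ENNReal.rpow_le_rpow (key v⁻¹.toReal y r hr) ENNReal.toReal_nonneg
  rw [amal, amal]
  exact iSup₂_le fun r hr => le_iSup₂_of_le r hr (hblock r hr)


end HT
end
end

section
/- Let (X,d,μ) be a space of homogeneous type whose measure satisfies 𝔞φ(r) ≤ μ(B(x,r)) ≤ 𝔟φ(r) for a positive nondecreasing function φ on (0,∞) and constants 𝔞,𝔟 > 0. Let 1 ≤ q ≤ α ≤ p ≤ ∞ and β with 0 < 1/s = 1/α − 1/β ≤ 1/q − 1/β ≤ 1/p. Then there exists C such that for every μ-measurable f, sup_{θ>0} θ μ({x ∈ X : M_{q,β} f(x) > θ})^{1/s} ≤ C ‖f‖_{q,p,α}. -/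
open MeasureTheory ENNReal Set Filter

noncomputable section

namespace HT

variable {X : Type*} [MeasurableSpace X]

/-- superadditivity of rpow over finset sums, exponent ≥ 1 -/
lemma sum_rpow_le_rpow_sum {ι : Type*} (J : Finset ι) (f : ι → ℝ≥0∞) {t : ℝ} (ht : 1 ≤ t) :
    ∑ i ∈ J, f i ^ t ≤ (∑ i ∈ J, f i) ^ t := by
  classical
  induction J using Finset.induction with
  | empty => simp [ENNReal.zero_rpow_of_pos (lt_of_lt_of_le zero_lt_one ht)]
  | insert _ _ hnot ih =>
      rename_i i J'
      rw [Finset.sum_insert hnot, Finset.sum_insert hnot]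
      calc f i ^ t + ∑ j ∈ J', f j ^ t ≤ f i ^ t + (∑ j ∈ J', f j) ^ t := by gcongr
        _ ≤ (f i + ∑ j ∈ J', f j) ^ t := ENNReal.add_rpow_le_rpow_add _ _ ht

/-- antitone in the base for nonpositive exponents -/
lemma rpow_le_rpow_of_nonpos {x y : ℝ≥0∞} {c : ℝ} (hc : c ≤ 0) (hxy : x ≤ y) :
    y ^ c ≤ x ^ c := by
  have h := ENNReal.rpow_le_rpow hxy (neg_nonneg.2 hc)
  calc y ^ c = (y ^ (-c))⁻¹ := by rw [← ENNReal.rpow_neg, neg_neg]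
    _ ≤ (x ^ (-c))⁻¹ := ENNReal.inv_le_inv.2 h
    _ = x ^ c := by rw [← ENNReal.rpow_neg, neg_neg]

lemma cancel_left {c x y : ℝ≥0∞} (hc0 : c ≠ 0) (hct : c ≠ ∞) (h : c * x ≤ y) :
    x ≤ c⁻¹ * y := by
  rw [← one_mul x, ← ENNReal.inv_mul_cancel hc0 hct, mul_assoc]
  exact mul_le_mul_right h _

section geom
variable (d : X → X → ℝ) (μ : Measure X)

lemma doubling_iter (Cμ : ℝ)
    (hdoub : ∀ x r, 0 < r → μ (ball d x (2 * r)) ≤ ENNReal.ofReal Cμ * μ (ball d x r))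
    (n : ℕ) (x : X) (r : ℝ) (hr : 0 < r) :
    μ (ball d x (2 ^ n * r)) ≤ (ENNReal.ofReal Cμ) ^ n * μ (ball d x r) := by
  induction n with
  | zero => simp
  | succ m ih =>
      have h2 : (2:ℝ) ^ (m+1) * r = 2 * (2 ^ m * r) := by ring
      rw [h2]
      calc μ (ball d x (2 * (2 ^ m * r))) ≤ ENNReal.ofReal Cμ * μ (ball d x (2 ^ m * r)) :=
            hdoub x _ (by positivity)
        _ ≤ ENNReal.ofReal Cμ * ((ENNReal.ofReal Cμ) ^ m * μ (ball d x r)) := by gcongr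
        _ = (ENNReal.ofReal Cμ) ^ (m+1) * μ (ball d x r) := by ring

lemma ball_compare (Cμ : ℝ)
    (hdoub : ∀ x r, 0 < r → μ (ball d x (2 * r)) ≤ ENNReal.ofReal Cμ * μ (ball d x r))
    (φ : ℝ → ℝ) (hφmono : MonotoneOn φ (Ioi 0))
    (a b : ℝ) (ha : 0 < a) (hb : 0 < b)
    (hμφ : ∀ (x : X) (r : ℝ), 0 < r →
      ENNReal.ofReal (a * φ r) ≤ μ (ball d x r) ∧ μ (ball d x r) ≤ ENNReal.ofReal (b * φ r))
    (x y : X) (r t : ℝ) (n : ℕ) (hr : 0 < r) (ht : 0 < t) (htn : t ≤ 2 ^ n * r) :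
    μ (ball d y t) ≤ ENNReal.ofReal (b/a) * (ENNReal.ofReal Cμ) ^ n * μ (ball d x r) := by
  have h2n : (0:ℝ) < 2 ^ n * r := by positivity
  have h1 : μ (ball d y t) ≤ ENNReal.ofReal (b * φ t) := (hμφ y t ht).2
  have h2 : φ t ≤ φ (2 ^ n * r) := hφmono (mem_Ioi.2 ht) (mem_Ioi.2 h2n) htn
  have h3 : ENNReal.ofReal (b * φ t) ≤ ENNReal.ofReal (b * φ (2 ^ n * r)) := by
    exact ENNReal.ofReal_le_ofReal (mul_le_mul_of_nonneg_left h2 hb.le)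
  have h4 : ENNReal.ofReal (b * φ (2 ^ n * r)) =
      ENNReal.ofReal (b/a) * ENNReal.ofReal (a * φ (2 ^ n * r)) := by
    have hba : b/a * (a * φ (2 ^ n * r)) = b * φ (2 ^ n * r) := by field_simp
    rw [← ENNReal.ofReal_mul (by positivity), hba]
  have h5 : ENNReal.ofReal (a * φ (2 ^ n * r)) ≤ μ (ball d x (2 ^ n * r)) := (hμφ x _ h2n).1
  calc μ (ball d y t) ≤ ENNReal.ofReal (b/a) * ENNReal.ofReal (a * φ (2 ^ n * r)) := by
        rw [← h4]; exact h1.trans h3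
    _ ≤ ENNReal.ofReal (b/a) * ((ENNReal.ofReal Cμ) ^ n * μ (ball d x r)) := by
        gcongr
        exact h5.trans (doubling_iter d μ Cμ hdoub n x r hr)
    _ = ENNReal.ofReal (b/a) * (ENNReal.ofReal Cμ) ^ n * μ (ball d x r) := by ring

end geom


lemma rpow_ne_zero_ne_top {x : ℝ≥0∞} (h0 : x ≠ 0) (ht : x ≠ ∞) (y : ℝ) :
    x ^ y ≠ 0 ∧ x ^ y ≠ ∞ := by
  constructor
  · simp [ENNReal.rpow_eq_zero_iff, h0, ht]
  · simp [ENNReal.rpow_eq_top_iff, h0, ht]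

set_option maxHeartbeats 2000000

/-- (Theorem D.) If `𝔞φ(r) ≤ μ(B(x,r)) ≤ 𝔟φ(r)` for a positive
nondecreasing `φ`, `1 ≤ q ≤ α ≤ p ≤ ∞` and `0 < 1/s = 1/α − 1/β ≤ 1/q − 1/β ≤ 1/p`,
then `sup_{θ>0} θ μ({M_{q,β}f > θ})^{1/s} ≤ C ‖f‖_{q,p,α}`. -/
theorem weak_type_maxOp_amalgam
    (d : X → X → ℝ) (μ : Measure X) (κ : ℝ) (hκ : 1 ≤ κ)
    (hd0 : ∀ x, d x x = 0) (hdpos : ∀ x y, 0 ≤ d x y) (hdsym : ∀ x y, d x y = d y x)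
    (hdtri : ∀ x y z, d x z ≤ κ * (d x y + d y z))
    (hballm : ∀ x r, MeasurableSet (ball d x r))
    (Cμ : ℝ) (hCμ : 1 ≤ Cμ)
    (hdoub : ∀ x r, 0 < r → μ (ball d x (2 * r)) ≤ ENNReal.ofReal Cμ * μ (ball d x r))
    (hfin : ∀ x r, 0 < r → μ (ball d x r) < ∞)
    (hXinf : μ univ = ∞) (hpt : ∀ x : X, μ {x} = 0)
    (hann : ∀ (x : X) (r R : ℝ), 0 < r → r < R → (ball d x R \ ball d x r).Nonempty)
    (φ : ℝ → ℝ) (hφpos : ∀ r : ℝ, 0 < r → 0 < φ r) (hφmono : MonotoneOn φ (Ioi 0))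
    (a b : ℝ) (ha : 0 < a) (hb : 0 < b)
    (hμφ : ∀ (x : X) (r : ℝ), 0 < r →
      ENNReal.ofReal (a * φ r) ≤ μ (ball d x r) ∧
        μ (ball d x r) ≤ ENNReal.ofReal (b * φ r))
    (q α p β : ℝ≥0∞) (s : ℝ)
    (hq : 1 ≤ q) (hqα : q ≤ α) (hαp : α ≤ p)
    (hs : 1 / s = α⁻¹.toReal - β⁻¹.toReal) (hspos : 0 < 1 / s)
    (hsqβ : 1 / s ≤ q⁻¹.toReal - β⁻¹.toReal)
    (hqβp : q⁻¹.toReal - β⁻¹.toReal ≤ p⁻¹.toReal) :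
    ∃ C > (0 : ℝ), ∀ f : X → ℝ, Measurable f → ∀ θ : ℝ, 0 < θ →
      ENNReal.ofReal θ * μ {x | ENNReal.ofReal θ < maxOp d μ q β (en f) x} ^ (1 / s) ≤
        ENNReal.ofReal C * amal d μ q p α (en f) := by
  classical
  set b' := β⁻¹.toReal with hb'def
  set a' := α⁻¹.toReal with ha'def
  set q' := q⁻¹.toReal with hq'def
  set p' := p⁻¹.toReal with hp'def
  have hb'0 : 0 ≤ b' := ENNReal.toReal_nonneg
  have ha'b' : 0 < a' - b' := by rw [← hs]; exact hspos
  have ha'pos : 0 < a' := by linarith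
  have hα_ne_top : α ≠ ∞ := by
    intro h; rw [ha'def, h] at ha'pos; simp at ha'pos
  have hq_ne_top : q ≠ ∞ := ne_top_of_le_ne_top hα_ne_top hqα
  have hq'b' : 0 < q' - b' := lt_of_lt_of_le hspos hsqβ
  have hp'pos : 0 < p' := lt_of_lt_of_le hq'b' hqβp
  have hp_ne_top : p ≠ ∞ := by
    intro h; rw [hp'def, h] at hp'pos; simp at hp'pos
  have h1p : (1:ℝ≥0∞) ≤ p := hq.trans (hqα.trans hαp)
  set pr := p.toReal with hprdef
  set qr := q.toReal with hqrdef
  have hqr1 : 1 ≤ qr := by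
    rw [hqrdef, ← ENNReal.toReal_one]; exact ENNReal.toReal_mono hq_ne_top hq
  have hpr1 : 1 ≤ pr := by
    rw [hprdef, ← ENNReal.toReal_one]; exact ENNReal.toReal_mono hp_ne_top h1p
  have hqr0 : 0 < qr := lt_of_lt_of_le zero_lt_one hqr1
  have hpr0 : 0 < pr := lt_of_lt_of_le zero_lt_one hpr1
  have hqrpr : qr ≤ pr := ENNReal.toReal_mono hp_ne_top (hqα.trans hαp)
  have hp'inv : p' = pr⁻¹ := by rw [hp'def, hprdef, ENNReal.toReal_inv]
  have hq'inv : q' = qr⁻¹ := by rw [hq'def, hqrdef, ENNReal.toReal_inv]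
  have hq'a' : a' ≤ q' := by
    rw [ha'def, hq'def, ENNReal.toReal_inv, ENNReal.toReal_inv]
    exact inv_anti₀ hqr0 (ENNReal.toReal_mono hα_ne_top hqα)
  set ee := a' - p' - q' with heedef
  have hee : ee < 0 := by rw [heedef]; linarith
  have hs0 : 0 < s := one_div_pos.mp hspos
  have hsinv : s⁻¹ = a' - b' := by rw [← one_div]; exact hs
  have hsprle : pr ≤ s := by
    have h1 : 1/s ≤ 1/pr := by
      rw [one_div pr, ← hp'inv]; exact le_trans hsqβ hqβp
    exact le_of_one_div_le_one_div hs0 h1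
  set τ := pr * (q' - b') with hτdef
  have hτpos : 0 < τ := mul_pos hpr0 hq'b'
  have hτ1 : τ ≤ 1 := by
    have h2 := mul_le_mul_of_nonneg_left hqβp (le_of_lt hpr0)
    rw [hp'inv] at h2
    rwa [mul_inv_cancel₀ hpr0.ne'] at h2
  have hprp' : pr * p' = 1 := by rw [hp'inv, mul_inv_cancel₀ hpr0.ne']
  -- geometric constants
  obtain ⟨N, hN⟩ := pow_unbounded_of_one_lt (R := ℝ) (κ * (1+4*κ)) one_lt_two
  have hκ0 : (0:ℝ) < κ := lt_of_lt_of_le zero_lt_one hκ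
  have hκκ : κ ≤ κ*κ := le_mul_of_one_le_left hκ0.le hκ
  have hκexp : κ*(1+4*κ) = κ + 4*(κ*κ) := by ring
  have h2κN : 2*κ ≤ 2^N := by linarith
  have h4κN : 4*κ ≤ 2^N := by linarith
  have hc₀N : κ*(1+4*κ) ≤ 2^N := hN.le
  have hba_pos : (0:ℝ) < b/a := by positivity
  set Kc := ENNReal.ofReal (b/a) * (ENNReal.ofReal Cμ)^N with hKcdef
  have hCμ0 : (ENNReal.ofReal Cμ) ≠ 0 := (ENNReal.ofReal_pos.2 (by linarith)).ne'
  have hKc0 : Kc ≠ 0 := mul_ne_zero (ENNReal.ofReal_pos.2 hba_pos).ne' (pow_ne_zero _ hCμ0)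
  have hKctop : Kc ≠ ∞ := ENNReal.mul_ne_top ENNReal.ofReal_ne_top
    (pow_ne_top ENNReal.ofReal_ne_top)
  set K₂ := ENNReal.ofReal (b/a) * Kc with hK₂def
  have hK₂0 : K₂ ≠ 0 := mul_ne_zero (ENNReal.ofReal_pos.2 hba_pos).ne' hKc0
  have hK₂top : K₂ ≠ ∞ := ENNReal.mul_ne_top ENNReal.ofReal_ne_top hKctop
  set C₃ := K₂ ^ (-(ee*pr)) * Kc ^ (-(ee*(s-pr))) with hC₃def
  have heepr : 0 ≤ -(ee*pr) := by rw [← neg_mul]; exact mul_nonneg (neg_nonneg.2 hee.le) hpr0.le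
  have heespr : 0 ≤ -(ee*(s-pr)) := by rw [← neg_mul]; exact mul_nonneg (neg_nonneg.2 hee.le) (by linarith)
  have hC₃top : C₃ ≠ ∞ := ENNReal.mul_ne_top
    (ENNReal.rpow_ne_top_of_nonneg heepr hK₂top)
    (ENNReal.rpow_ne_top_of_nonneg heespr hKctop)
  have hKcC₃top : Kc * C₃ ≠ ∞ := ENNReal.mul_ne_top hKctop hC₃top
  refine ⟨1 + ((Kc * C₃) ^ s⁻¹).toReal, by positivity, ?_⟩
  intro f hf θ hθ
  set tb := ENNReal.ofReal θ with htbdef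
  have htb0 : tb ≠ 0 := (ENNReal.ofReal_pos.2 hθ).ne'
  have htbtop : tb ≠ ∞ := ENNReal.ofReal_ne_top
  set A := amal d μ q p α (en f) with hAdef
  -- basic ball measure facts
  have hμB0 : ∀ (z : X) (r : ℝ), 0 < r → μ (ball d z r) ≠ 0 := by
    intro z r hr
    have h1 : (0:ℝ≥0∞) < ENNReal.ofReal (a * φ r) :=
      ENNReal.ofReal_pos.2 (by have := hφpos r hr; positivity)
    exact (lt_of_lt_of_le h1 (hμφ z r hr).1).ne'
  have hμBtop : ∀ (z : X) (r : ℝ), 0 < r → μ (ball d z r) ≠ ∞ := fun z r hr => (hfin z r hr).ne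
  -- monotonicity of lqn in the set
  have hlqnmono : ∀ (A₁ A₂ : Set X), A₁ ⊆ A₂ → lqn μ q A₁ (en f) ≤ lqn μ q A₂ (en f) := by
    intro A₁ A₂ hsub
    rw [lqn, lqn, if_neg hq_ne_top, if_neg hq_ne_top]
    exact ENNReal.rpow_le_rpow (lintegral_mono_set hsub) (by positivity)
  -- lower bound on lqn from witness inequality
  have hLlow : ∀ (z : X) (r : ℝ), 0 < r →
      tb < μ (ball d z r) ^ (b' - q') * lqn μ q (ball d z r) (en f) →
      tb * μ (ball d z r) ^ (q' - b') ≤ lqn μ q (ball d z r) (en f) := by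
    intro z r hr hw
    have h0 := hμB0 z r hr
    have ht := hμBtop z r hr
    have h1 : μ (ball d z r) ^ (q'-b') * tb ≤
        μ (ball d z r) ^ (q'-b') * (μ (ball d z r) ^ (b'-q') * lqn μ q (ball d z r) (en f)) :=
      mul_le_mul_right hw.le _
    rw [← mul_assoc, ← ENNReal.rpow_add _ _ h0 ht] at h1
    have h2 : q' - b' + (b' - q') = 0 := by ring
    rw [h2, ENNReal.rpow_zero, one_mul] at h1
    rwa [mul_comm] at h1
  -- blockNorm is below A
  have hbnle : ∀ R : ℝ, 0 < R → blockNorm d μ q p α (en f) R ≤ A := by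
    intro R hR
    rw [hAdef, amal]
    exact le_iSup_of_le R (by rw [iSup_pos hR])
  -- per-ball estimate
  have perball : ∀ (z : X) (r : ℝ), 0 < r →
      tb < μ (ball d z r) ^ (b' - q') * lqn μ q (ball d z r) (en f) →
      tb * μ (ball d z r) ^ (s⁻¹) ≤ Kc ^ (-ee) * A := by
    intro z r hr hw
    have h0 := hμB0 z r hr
    have htop := hμBtop z r hr
    have hL := hLlow z r hr hw
    set R' := 2*κ*r with hR'def
    have hR'0 : 0 < R' := by positivity
    have hsub : ∀ y ∈ ball d z r, ball d z r ⊆ ball d y R' := by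
      intro y hy u hu
      have hyz : d z y < r := hy
      have hzu : d z u < r := hu
      have h1 : d y u ≤ κ * (d y z + d z u) := hdtri y z u
      have h2 : d y z = d z y := hdsym y z
      show d y u < R'
      rw [hR'def]; rw [h2] at h1
      calc d y u ≤ κ * (d z y + d z u) := h1
        _ < κ * (r + r) := by
            apply mul_lt_mul_of_pos_left (by linarith) hκ0
        _ = 2*κ*r := by ring
    have hcomp : ∀ y : X, μ (ball d y R') ≤ Kc * μ (ball d z r) := by
      intro y
      have hcb := ball_compare d μ Cμ hdoub φ hφmono a b ha hb hμφ z y r R' N hr hR'0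
        (by rw [hR'def]; exact mul_le_mul_of_nonneg_right h2κN hr.le)
      rw [hKcdef]
      exact hcb
    set L := lqn μ q (ball d z r) (en f) with hLdef
    have hpoint : ∀ y ∈ ball d z r, ((Kc * μ (ball d z r)) ^ ee * L) ^ pr ≤
        (μ (ball d y R') ^ ee * lqn μ q (ball d y R') (en f)) ^ pr := by
      intro y hy
      apply ENNReal.rpow_le_rpow _ hpr0.le
      exact mul_le_mul' (rpow_le_rpow_of_nonpos hee.le (hcomp y)) (hlqnmono _ _ (hsub y hy))
    have hint : ((Kc * μ (ball d z r)) ^ ee * L) ^ pr * μ (ball d z r) ≤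
        ∫⁻ y, (μ (ball d y R') ^ ee * lqn μ q (ball d y R') (en f)) ^ pr ∂μ := by
      rw [← setLIntegral_const (ball d z r) (((Kc * μ (ball d z r)) ^ ee * L) ^ pr)]
      calc ∫⁻ _ in ball d z r, ((Kc * μ (ball d z r)) ^ ee * L) ^ pr ∂μ
          ≤ ∫⁻ y in ball d z r,
              (μ (ball d y R') ^ ee * lqn μ q (ball d y R') (en f)) ^ pr ∂μ :=
            setLIntegral_mono' (hballm z r) hpoint
        _ ≤ ∫⁻ y, (μ (ball d y R') ^ ee * lqn μ q (ball d y R') (en f)) ^ pr ∂μ :=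
            lintegral_mono' Measure.restrict_le_self le_rfl
    have hbn := hbnle R' hR'0
    rw [blockNorm, if_neg hp_ne_top, ← ha'def, ← hp'def, ← hq'def, ← hprdef, ← heedef] at hbn
    have hApr : ∫⁻ y, (μ (ball d y R') ^ ee * lqn μ q (ball d y R') (en f)) ^ pr ∂μ
        ≤ A ^ pr := by
      have h3 := ENNReal.rpow_le_rpow hbn hpr0.le
      rwa [← ENNReal.rpow_mul, inv_mul_cancel₀ hpr0.ne', ENNReal.rpow_one] at h3
    have hmain : ((Kc * μ (ball d z r)) ^ ee * L) ^ pr * μ (ball d z r) ≤ A ^ pr :=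
      le_trans hint hApr
    have hmain2 : (Kc * μ (ball d z r)) ^ ee * L * μ (ball d z r) ^ (pr⁻¹) ≤ A := by
      have h4 := ENNReal.rpow_le_rpow hmain (inv_nonneg.2 hpr0.le)
      rwa [ENNReal.mul_rpow_of_nonneg _ _ (inv_nonneg.2 hpr0.le), ← ENNReal.rpow_mul,
        mul_inv_cancel₀ hpr0.ne', ENNReal.rpow_one, ← ENNReal.rpow_mul,
        mul_inv_cancel₀ hpr0.ne', ENNReal.rpow_one] at h4
    have key1 : (Kc * μ (ball d z r)) ^ ee * (tb * μ (ball d z r) ^ (q'-b'))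
        * μ (ball d z r) ^ (pr⁻¹) = Kc ^ ee * (tb * μ (ball d z r) ^ (s⁻¹)) := by
      rw [ENNReal.mul_rpow_of_ne_top hKctop htop]
      rw [show (s⁻¹ : ℝ) = ee + ((q'-b') + pr⁻¹) by
        rw [hsinv, heedef, ← hp'inv]; ring]
      rw [ENNReal.rpow_add _ _ h0 htop, ENNReal.rpow_add _ _ h0 htop]
      ring
    have hchain : Kc ^ ee * (tb * μ (ball d z r) ^ (s⁻¹)) ≤ A := by
      rw [← key1]
      refine le_trans ?_ hmain2
      exact mul_le_mul_left (mul_le_mul_right hL _) _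
    obtain ⟨hKee0, hKeetop⟩ := rpow_ne_zero_ne_top hKc0 hKctop ee
    have := cancel_left hKee0 hKeetop hchain
    rwa [← ENNReal.rpow_neg] at this

  -- witness extraction
  have hwit : ∀ x : X, tb < maxOp d μ q β (en f) x → ∃ z r, 0 < r ∧ x ∈ ball d z r ∧
      tb < μ (ball d z r) ^ (b' - q') * lqn μ q (ball d z r) (en f) := by
    intro x hx
    rw [maxOp] at hx
    simp only [lt_iSup_iff] at hx
    obtain ⟨z, r, hr, hxb, hv⟩ := hx
    exact ⟨z, r, hr, hxb, hv⟩
  by_cases hE : {x | tb < maxOp d μ q β (en f) x} = ∅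
  · rw [hE, measure_empty, ENNReal.zero_rpow_of_pos hspos, mul_zero]
    exact zero_le
  by_cases hA0 : A = 0
  · exfalso
    obtain ⟨x₀, hx₀⟩ := Set.nonempty_iff_ne_empty.2 hE
    obtain ⟨z₀, r₀, hr₀, _, hv₀⟩ := hwit x₀ hx₀
    have h1 := perball z₀ r₀ hr₀ hv₀
    rw [hA0, mul_zero, le_zero_iff, mul_eq_zero] at h1
    rcases h1 with h1 | h1
    · exact htb0 h1
    · rw [ENNReal.rpow_eq_zero_iff] at h1
      rcases h1 with ⟨h1, _⟩ | ⟨h1, _⟩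
      · exact hμB0 z₀ r₀ hr₀ h1
      · exact hμBtop z₀ r₀ hr₀ h1
  by_cases hAtop : A = ∞
  · rw [hAtop, ENNReal.mul_top (ENNReal.ofReal_pos.2 (by positivity)).ne']
    exact le_top
  -- main case
  obtain ⟨x₀, hx₀⟩ := Set.nonempty_iff_ne_empty.2 hE
  obtain ⟨z₀, r₀, hr₀, _, hv₀⟩ := hwit x₀ hx₀
  set M := (tb⁻¹ * (Kc ^ (-ee) * A)) ^ s with hMdef
  obtain ⟨hKnee0, hKneetop⟩ := rpow_ne_zero_ne_top hKc0 hKctop (-ee)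
  have hM0 : M ≠ 0 := by
    rw [hMdef]
    exact (rpow_ne_zero_ne_top (mul_ne_zero (ENNReal.inv_ne_zero.2 htbtop)
      (mul_ne_zero hKnee0 hA0)) (ENNReal.mul_ne_top (ENNReal.inv_ne_top.2 htb0)
      (ENNReal.mul_ne_top hKneetop hAtop)) s).1
  have hMtop : M ≠ ∞ := by
    rw [hMdef]
    exact (rpow_ne_zero_ne_top (mul_ne_zero (ENNReal.inv_ne_zero.2 htbtop)
      (mul_ne_zero hKnee0 hA0)) (ENNReal.mul_ne_top (ENNReal.inv_ne_top.2 htb0)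
      (ENNReal.mul_ne_top hKneetop hAtop)) s).2
  have hperM : ∀ (z : X) (r : ℝ), 0 < r →
      tb < μ (ball d z r) ^ (b'-q') * lqn μ q (ball d z r) (en f) →
      μ (ball d z r) ≤ M := by
    intro z r hr hw
    have h1 := perball z r hr hw
    have h2 := cancel_left htb0 htbtop h1
    have h3 := ENNReal.rpow_le_rpow h2 hs0.le
    rwa [← ENNReal.rpow_mul, inv_mul_cancel₀ hs0.ne', ENNReal.rpow_one] at h3
  -- the radius bound T
  set SS := {t : ℝ | 0 < t ∧ ENNReal.ofReal (a * φ t) ≤ M} with hSSdef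
  have hr₀SS : r₀ ∈ SS := ⟨hr₀, le_trans (hμφ z₀ r₀ hr₀).1 (hperM z₀ r₀ hr₀ hv₀)⟩
  have hSSne : SS.Nonempty := ⟨r₀, hr₀SS⟩
  have hSSbdd : BddAbove SS := by
    have hun : (⋃ n : ℕ, ball d x₀ ((n:ℝ)+1)) = univ := by
      ext u
      simp only [mem_iUnion, mem_univ, iff_true]
      obtain ⟨n, hn⟩ := exists_nat_gt (d x₀ u)
      exact ⟨n, show d x₀ u < (n:ℝ)+1 from hn.trans (lt_add_one _)⟩
    have hdir : Directed (fun x1 x2 => x1 ⊆ x2) (fun n : ℕ => ball d x₀ ((n:ℝ)+1)) := by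
      intro m n
      refine ⟨max m n, fun u hu => ?_, fun u hu => ?_⟩ <;>
      · have : d x₀ u < _ := hu
        show d x₀ u < _
        have hc : ((m:ℝ) ⊔ (n:ℝ)) = ((max m n : ℕ) : ℝ) := by push_cast; rfl
        refine lt_of_lt_of_le this ?_
        rw [← hc]
        simp [le_max_iff]
    have hsup : (⨆ n : ℕ, μ (ball d x₀ ((n:ℝ)+1))) = ∞ := by
      rw [← Directed.measure_iUnion hdir, hun, hXinf]
    have hlt : ENNReal.ofReal (b/a) * M < ⨆ n : ℕ, μ (ball d x₀ ((n:ℝ)+1)) := by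
      rw [hsup]
      exact lt_top_iff_ne_top.2 (ENNReal.mul_ne_top ENNReal.ofReal_ne_top hMtop)
    rw [lt_iSup_iff] at hlt
    obtain ⟨n₁, hn₁⟩ := hlt
    refine ⟨(n₁:ℝ)+1, fun t ht => ?_⟩
    obtain ⟨ht0, htM⟩ := ht
    by_contra hgt
    push_neg at hgt
    have hn₁0 : (0:ℝ) < (n₁:ℝ)+1 := by positivity
    have h1 : μ (ball d x₀ ((n₁:ℝ)+1)) ≤ ENNReal.ofReal (b * φ ((n₁:ℝ)+1)) :=
      (hμφ _ _ hn₁0).2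
    have h2 : φ ((n₁:ℝ)+1) ≤ φ t := hφmono (mem_Ioi.2 hn₁0) (mem_Ioi.2 ht0) hgt.le
    have h3 : ENNReal.ofReal (b * φ ((n₁:ℝ)+1)) ≤ ENNReal.ofReal (b/a) * M := by
      calc ENNReal.ofReal (b * φ ((n₁:ℝ)+1)) ≤ ENNReal.ofReal (b * φ t) :=
            ENNReal.ofReal_le_ofReal (mul_le_mul_of_nonneg_left h2 hb.le)
        _ = ENNReal.ofReal (b/a) * ENNReal.ofReal (a * φ t) := by
            rw [← ENNReal.ofReal_mul (by positivity)]
            congr 1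
            field_simp
        _ ≤ ENNReal.ofReal (b/a) * M := mul_le_mul_right htM _
    exact absurd (h1.trans h3) (not_le.2 hn₁)
  set T := sSup SS with hTdef
  have hT0 : 0 < T := lt_of_lt_of_le hr₀ (le_csSup hSSbdd hr₀SS)
  have hT2 : 0 < T/2 := by positivity
  have hrT : ∀ (z : X) (r : ℝ), 0 < r →
      tb < μ (ball d z r) ^ (b'-q') * lqn μ q (ball d z r) (en f) → r ≤ T := by
    intro z r hr hw
    exact le_csSup hSSbdd ⟨hr, le_trans (hμφ z r hr).1 (hperM z r hr hw)⟩
  set Φ₀ := ENNReal.ofReal (a * φ (T/2)) with hΦ₀def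
  have hφT2 : 0 < φ (T/2) := hφpos _ hT2
  have hΦ₀0 : Φ₀ ≠ 0 := (ENNReal.ofReal_pos.2 (by positivity)).ne'
  have hΦ₀top : Φ₀ ≠ ∞ := ENNReal.ofReal_ne_top
  have hΦ₀M : Φ₀ ≤ M := by
    obtain ⟨t, htSS, hlt⟩ := exists_lt_of_lt_csSup hSSne (half_lt_self hT0)
    obtain ⟨ht0, htM⟩ := htSS
    refine le_trans ?_ htM
    apply ENNReal.ofReal_le_ofReal
    exact mul_le_mul_of_nonneg_left (hφmono (mem_Ioi.2 hT2) (mem_Ioi.2 ht0) hlt.le) ha.le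
  set R := 2*κ*T with hRdef
  have hR0 : 0 < R := by positivity
  have hballR : ∀ y : X, μ (ball d y R) ≤ K₂ * Φ₀ := by
    intro y
    have hcb := ball_compare d μ Cμ hdoub φ hφmono a b ha hb hμφ y y (T/2) R N hT2 hR0
      (by rw [hRdef]
          calc 2*κ*T = (4*κ)*(T/2) := by ring
            _ ≤ 2^N*(T/2) := mul_le_mul_of_nonneg_right h4κN hT2.le)
    have h2 : μ (ball d y (T/2)) ≤ ENNReal.ofReal (b * φ (T/2)) := (hμφ y _ hT2).2
    have h3 : ENNReal.ofReal (b * φ (T/2)) = ENNReal.ofReal (b/a) * Φ₀ := by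
      rw [hΦ₀def, ← ENNReal.ofReal_mul (by positivity)]
      congr 1
      field_simp
    calc μ (ball d y R) ≤ ENNReal.ofReal (b/a) * (ENNReal.ofReal Cμ)^N * μ (ball d y (T/2)) :=
          hcb
      _ ≤ ENNReal.ofReal (b/a) * (ENNReal.ofReal Cμ)^N * (ENNReal.ofReal (b/a) * Φ₀) := by
          rw [← h3]; exact mul_le_mul_right h2 _
      _ = K₂ * Φ₀ := by rw [hK₂def, hKcdef]; ring
  have hballT : ∀ z : X, Φ₀ ≤ μ (ball d z T) := by
    intro z
    refine le_trans ?_ (hμφ z T hT0).1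
    apply ENNReal.ofReal_le_ofReal
    exact mul_le_mul_of_nonneg_left (hφmono (mem_Ioi.2 hT2) (mem_Ioi.2 hT0) (by linarith)) ha.le
  -- core estimate for finite disjoint families of witnesses
  have hprqr1 : 1 ≤ qr⁻¹ * pr := by
    have hh : qr⁻¹ * pr = pr / qr := by ring
    rw [hh]
    exact (one_le_div hqr0).2 hqrpr
  have heepr0 : ee * pr ≤ 0 := by linarith
  have heepr1 : ee * pr + 1 ≤ 0 := by
    have h1 : 0 ≤ pr*(q'-a') := mul_nonneg hpr0.le (by linarith)
    have h2 : -(ee*pr) - 1 = pr*(q'-a') + (pr*p' - 1) := by rw [heedef]; ring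
    rw [hprp'] at h2
    linarith
  have core : ∀ J : Finset (X × ℝ),
      (∀ w ∈ J, 0 < w.2 ∧
        tb < μ (ball d w.1 w.2) ^ (b'-q') * lqn μ q (ball d w.1 w.2) (en f)) →
      ((↑J : Set (X × ℝ)).Pairwise fun v w =>
        Disjoint (ball d v.1 v.2) (ball d w.1 w.2)) →
      ∑ w ∈ J, μ (ball d w.1 w.2) ≤ C₃ * (A * tb⁻¹) ^ s := by
    intro J hJw hJd
    have hpoint : ∀ y : X,
        ∑ w ∈ J, (ball d w.1 T).indicator
          (fun _ => (K₂*Φ₀)^(ee*pr) * (tb^pr * μ (ball d w.1 w.2)^τ)) y ≤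
        (μ (ball d y R)^ee * lqn μ q (ball d y R) (en f))^pr := by
      intro y
      have hLHS : ∑ w ∈ J, (ball d w.1 T).indicator
          (fun _ => (K₂*Φ₀)^(ee*pr) * (tb^pr * μ (ball d w.1 w.2)^τ)) y
          = ∑ w ∈ J.filter (fun w => y ∈ ball d w.1 T),
            (K₂*Φ₀)^(ee*pr) * (tb^pr * μ (ball d w.1 w.2)^τ) := by
        rw [Finset.sum_filter]
        exact Finset.sum_congr rfl (fun w _ => by rw [Set.indicator_apply])
      rw [hLHS]
      set S := J.filter (fun w => y ∈ ball d w.1 T) with hSdef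
      have hSsub : ∀ w ∈ S, w ∈ J := fun w hw => (Finset.mem_filter.1 hw).1
      have hsubR : ∀ w ∈ S, ball d w.1 w.2 ⊆ ball d y R := by
        intro w hw u hu
        obtain ⟨hwJ, hyw⟩ := Finset.mem_filter.1 hw
        obtain ⟨hw2, hwv⟩ := hJw w hwJ
        have hwT : w.2 ≤ T := hrT w.1 w.2 hw2 hwv
        have h1 : d w.1 y < T := hyw
        have h2 : d w.1 u < w.2 := hu
        have h3 : d y u ≤ κ * (d y w.1 + d w.1 u) := hdtri y w.1 u
        rw [hdsym y w.1] at h3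
        show d y u < R
        rw [hRdef]
        calc d y u ≤ κ * (d w.1 y + d w.1 u) := h3
          _ < κ * (T + T) := by
              apply mul_lt_mul_of_pos_left (by linarith) hκ0
          _ = 2*κ*T := by ring
      have hdisjS : (↑S : Set (X×ℝ)).PairwiseDisjoint (fun w => ball d w.1 w.2) := by
        intro v hv w hw hvw
        exact hJd ((Finset.coe_subset.2 (Finset.filter_subset _ _)) hv)
          ((Finset.coe_subset.2 (Finset.filter_subset _ _)) hw) hvw
      have hIsum : ∑ w ∈ S, ∫⁻ x in ball d w.1 w.2, (en f x)^q.toReal ∂μ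
          ≤ ∫⁻ x in ball d y R, (en f x)^q.toReal ∂μ := by
        rw [← lintegral_biUnion_finset hdisjS (fun w _ => hballm _ _) _]
        exact lintegral_mono_set (Set.iUnion₂_subset hsubR)
      have hlq : lqn μ q (ball d y R) (en f)
          = (∫⁻ x in ball d y R, (en f x)^q.toReal ∂μ)^qr⁻¹ := by
        rw [lqn, if_neg hq_ne_top, ← hqrdef]
      calc ∑ w ∈ S, (K₂*Φ₀)^(ee*pr) * (tb^pr * μ (ball d w.1 w.2)^τ)
          ≤ ∑ w ∈ S, (K₂*Φ₀)^(ee*pr) *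
              ((∫⁻ x in ball d w.1 w.2, (en f x)^q.toReal ∂μ) ^ (qr⁻¹*pr)) := by
            apply Finset.sum_le_sum
            intro w hw
            apply mul_le_mul_right
            obtain ⟨hw2, hwv⟩ := hJw w (hSsub w hw)
            have hLl := hLlow w.1 w.2 hw2 hwv
            calc tb^pr * μ (ball d w.1 w.2)^τ
                = (tb * μ (ball d w.1 w.2)^(q'-b'))^pr := by
                  rw [ENNReal.mul_rpow_of_nonneg _ _ hpr0.le, ← ENNReal.rpow_mul]
                  congr 2
                  rw [hτdef]; ring
              _ ≤ (lqn μ q (ball d w.1 w.2) (en f))^pr :=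
                  ENNReal.rpow_le_rpow hLl hpr0.le
              _ = (∫⁻ x in ball d w.1 w.2, (en f x)^q.toReal ∂μ) ^ (qr⁻¹*pr) := by
                  rw [lqn, if_neg hq_ne_top, ← hqrdef, ← ENNReal.rpow_mul]
        _ = (K₂*Φ₀)^(ee*pr) * ∑ w ∈ S,
              (∫⁻ x in ball d w.1 w.2, (en f x)^q.toReal ∂μ)^(qr⁻¹*pr) := by
            rw [Finset.mul_sum]
        _ ≤ (K₂*Φ₀)^(ee*pr) *
              (∑ w ∈ S, ∫⁻ x in ball d w.1 w.2, (en f x)^q.toReal ∂μ)^(qr⁻¹*pr) :=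
            mul_le_mul_right (sum_rpow_le_rpow_sum S _ hprqr1) _
        _ ≤ (K₂*Φ₀)^(ee*pr) * (∫⁻ x in ball d y R, (en f x)^q.toReal ∂μ)^(qr⁻¹*pr) :=
            mul_le_mul_right (ENNReal.rpow_le_rpow hIsum (by positivity)) _
        _ ≤ (μ (ball d y R)^ee * lqn μ q (ball d y R) (en f))^pr := by
            rw [ENNReal.mul_rpow_of_nonneg _ _ hpr0.le, hlq, ← ENNReal.rpow_mul,
              ← ENNReal.rpow_mul]
            exact mul_le_mul_left (rpow_le_rpow_of_nonpos heepr0 (hballR y)) _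
    have hbnR := hbnle R hR0
    rw [blockNorm, if_neg hp_ne_top, ← ha'def, ← hp'def, ← hq'def, ← hprdef, ← heedef] at hbnR
    have hApr : ∫⁻ y, (μ (ball d y R)^ee * lqn μ q (ball d y R) (en f))^pr ∂μ ≤ A^pr := by
      have h3 := ENNReal.rpow_le_rpow hbnR hpr0.le
      rwa [← ENNReal.rpow_mul, inv_mul_cancel₀ hpr0.ne', ENNReal.rpow_one] at h3
    have hintB : ∑ w ∈ J,
        (K₂*Φ₀)^(ee*pr) * (tb^pr * μ (ball d w.1 w.2)^τ) * μ (ball d w.1 T) ≤ A^pr := by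
      calc ∑ w ∈ J, (K₂*Φ₀)^(ee*pr) * (tb^pr * μ (ball d w.1 w.2)^τ) * μ (ball d w.1 T)
          = ∫⁻ y, ∑ w ∈ J, (ball d w.1 T).indicator
              (fun _ => (K₂*Φ₀)^(ee*pr) * (tb^pr * μ (ball d w.1 w.2)^τ)) y ∂μ := by
            rw [lintegral_finset_sum _ (fun w _ => measurable_const.indicator (hballm _ _))]
            refine (Finset.sum_congr rfl (fun w _ => ?_)).symm
            rw [lintegral_indicator (hballm _ _), setLIntegral_const]
        _ ≤ ∫⁻ y, (μ (ball d y R)^ee * lqn μ q (ball d y R) (en f))^pr ∂μ :=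
            lintegral_mono hpoint
        _ ≤ A^pr := hApr
    have hstep2 : (K₂*Φ₀)^(ee*pr) * tb^pr * Φ₀ * ∑ w ∈ J, μ (ball d w.1 w.2)^τ ≤ A^pr := by
      refine le_trans ?_ hintB
      rw [Finset.mul_sum]
      apply Finset.sum_le_sum
      intro w hw
      calc (K₂*Φ₀)^(ee*pr) * tb^pr * Φ₀ * μ (ball d w.1 w.2)^τ
          = (K₂*Φ₀)^(ee*pr) * (tb^pr * μ (ball d w.1 w.2)^τ) * Φ₀ := by ring
        _ ≤ (K₂*Φ₀)^(ee*pr) * (tb^pr * μ (ball d w.1 w.2)^τ) * μ (ball d w.1 T) :=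
            mul_le_mul_right (hballT w.1) _
    have hstep1 : ∑ w ∈ J, μ (ball d w.1 w.2)
        ≤ M^(1-τ) * ∑ w ∈ J, μ (ball d w.1 w.2)^τ := by
      rw [Finset.mul_sum]
      apply Finset.sum_le_sum
      intro w hw
      obtain ⟨hw2, hwv⟩ := hJw w hw
      have h0 := hμB0 w.1 w.2 hw2
      have htop := hμBtop w.1 w.2 hw2
      calc μ (ball d w.1 w.2) = μ (ball d w.1 w.2)^τ * μ (ball d w.1 w.2)^(1-τ) := by
            rw [← ENNReal.rpow_add _ _ h0 htop]
            norm_num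
        _ ≤ μ (ball d w.1 w.2)^τ * M^(1-τ) :=
            mul_le_mul_right (ENNReal.rpow_le_rpow (hperM w.1 w.2 hw2 hwv) (by linarith)) _
        _ = M^(1-τ) * μ (ball d w.1 w.2)^τ := mul_comm _ _
    -- final algebra
    obtain ⟨hKΦ0, hKΦtop⟩ := rpow_ne_zero_ne_top (mul_ne_zero hK₂0 hΦ₀0)
      (ENNReal.mul_ne_top hK₂top hΦ₀top) (ee*pr)
    obtain ⟨htbpr0, htbprtop⟩ := rpow_ne_zero_ne_top htb0 htbtop pr
    have hc0 : (K₂*Φ₀)^(ee*pr) * tb^pr * Φ₀ ≠ 0 :=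
      mul_ne_zero (mul_ne_zero hKΦ0 htbpr0) hΦ₀0
    have hctop : (K₂*Φ₀)^(ee*pr) * tb^pr * Φ₀ ≠ ∞ :=
      ENNReal.mul_ne_top (ENNReal.mul_ne_top hKΦtop htbprtop) hΦ₀top
    have hfinalalg : M^(1-τ) * A^pr
        ≤ (K₂*Φ₀)^(ee*pr) * tb^pr * Φ₀ * (C₃ * (A * tb⁻¹) ^ s) := by
      have hreal1 : s * (-τ - ee*pr) = s - pr := by
        have h1 : -τ - ee*pr = 1 - pr*(a'-b') := by
          have h2 : -τ - ee*pr = pr*p' - pr*(a'-b') := by rw [hτdef, heedef]; ring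
          rw [hprp'] at h2
          exact h2
        rw [h1, ← hsinv]
        field_simp
      -- left side in normal form
      have hLeq : M^(1-τ) * A^pr
          = M^(ee*pr+1) * (tb^(pr-s) * (Kc^(-(ee*(s-pr))) * A^s)) := by
        have e1 : M^((1:ℝ)-τ) = M^(ee*pr+1) * M^(-τ-ee*pr) := by
          rw [← ENNReal.rpow_add _ _ hM0 hMtop]
          congr 1
          ring
        have e2 : M^(-τ-ee*pr) = tb^(pr-s) * (Kc^(-(ee*(s-pr))) * A^(s-pr)) := by
          rw [hMdef, ← ENNReal.rpow_mul, hreal1,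
            ENNReal.mul_rpow_of_ne_top (ENNReal.inv_ne_top.2 htb0)
              (ENNReal.mul_ne_top hKneetop hAtop),
            ENNReal.mul_rpow_of_ne_top hKneetop hAtop,
            ENNReal.inv_rpow, ← ENNReal.rpow_neg, ← ENNReal.rpow_mul]
          congr 2
          · ring
          · congr 1
            ring
        rw [e1, e2]
        have e3 : A^(s-pr) * A^pr = A^s := by
          rw [← ENNReal.rpow_add _ _ hA0 hAtop]
          congr 1
          ring
        calc M^(ee*pr+1) * (tb^(pr-s) * (Kc^(-(ee*(s-pr))) * A^(s-pr))) * A^pr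
            = M^(ee*pr+1) * (tb^(pr-s) * (Kc^(-(ee*(s-pr))) * (A^(s-pr) * A^pr))) := by ring
          _ = M^(ee*pr+1) * (tb^(pr-s) * (Kc^(-(ee*(s-pr))) * A^s)) := by rw [e3]
      have hReq : (K₂*Φ₀)^(ee*pr) * tb^pr * Φ₀ * (C₃ * (A * tb⁻¹) ^ s)
          = Φ₀^(ee*pr+1) * (tb^(pr-s) * (Kc^(-(ee*(s-pr))) * A^s)) := by
        have e4 : (K₂*Φ₀)^(ee*pr) = K₂^(ee*pr) * Φ₀^(ee*pr) :=
          ENNReal.mul_rpow_of_ne_top hK₂top hΦ₀top _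
        have e5 : (A * tb⁻¹)^s = A^s * tb^(-s) := by
          rw [ENNReal.mul_rpow_of_ne_top hAtop (ENNReal.inv_ne_top.2 htb0),
            ENNReal.inv_rpow, ← ENNReal.rpow_neg]
        have e6 : Φ₀^(ee*pr) * Φ₀ = Φ₀^(ee*pr+1) := by
          rw [ENNReal.rpow_add _ _ hΦ₀0 hΦ₀top, ENNReal.rpow_one]
        have e7 : K₂^(ee*pr) * K₂^(-(ee*pr)) = 1 := by
          rw [← ENNReal.rpow_add _ _ hK₂0 hK₂top]
          norm_num
        have e8 : tb^pr * tb^(-s) = tb^(pr-s) := by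
          rw [← ENNReal.rpow_add _ _ htb0 htbtop, sub_eq_add_neg]
        rw [hC₃def, e4, e5]
        calc K₂^(ee*pr) * Φ₀^(ee*pr) * tb^pr * Φ₀ *
              (K₂ ^ (-(ee*pr)) * Kc ^ (-(ee*(s-pr))) * (A^s * tb^(-s)))
            = (K₂^(ee*pr) * K₂^(-(ee*pr))) * (Φ₀^(ee*pr) * Φ₀) *
              ((tb^pr * tb^(-s)) * (Kc^(-(ee*(s-pr))) * A^s)) := by ring
          _ = Φ₀^(ee*pr+1) * (tb^(pr-s) * (Kc^(-(ee*(s-pr))) * A^s)) := by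
              rw [e6, e7, e8, one_mul]
      rw [hLeq, hReq]
      exact mul_le_mul_left (rpow_le_rpow_of_nonpos heepr1 hΦ₀M) _
    rw [← ENNReal.mul_le_mul_iff_right hc0 hctop]
    calc (K₂*Φ₀)^(ee*pr) * tb^pr * Φ₀ * ∑ w ∈ J, μ (ball d w.1 w.2)
        ≤ (K₂*Φ₀)^(ee*pr) * tb^pr * Φ₀ * (M^(1-τ) * ∑ w ∈ J, μ (ball d w.1 w.2)^τ) :=
          mul_le_mul_right hstep1 _
      _ = M^(1-τ) * ((K₂*Φ₀)^(ee*pr) * tb^pr * Φ₀ * ∑ w ∈ J, μ (ball d w.1 w.2)^τ) := by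
          ring
      _ ≤ M^(1-τ) * A^pr := mul_le_mul_right hstep2 _
      _ ≤ (K₂*Φ₀)^(ee*pr) * tb^pr * Φ₀ * (C₃ * (A * tb⁻¹) ^ s) := hfinalalg
  -- abbreviations for the selection construction
  set IsW : X × ℝ → Prop := fun w => 0 < w.2 ∧
      tb < μ (ball d w.1 w.2) ^ (b'-q') * lqn μ q (ball d w.1 w.2) (en f) with hIsWdef
  set Dis : X × ℝ → X × ℝ → Prop := fun v w =>
      Disjoint (ball d v.1 v.2) (ball d w.1 w.2) with hDisdef
  have hDsymm : Symmetric Dis := fun u v h => h.symm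
  set Cls : ℕ → X × ℝ → Prop := fun m w => T/2^(m+1) < w.2 ∧ w.2 ≤ T/2^m with hClsdef
  have hcenter : ∀ w : X × ℝ, IsW w → w.1 ∈ ball d w.1 w.2 := by
    intro w hw
    show d w.1 w.1 < w.2
    rw [hd0]
    exact hw.1
  have hndisself : ∀ w : X × ℝ, IsW w → ¬ Dis w w := by
    intro w hw hdd
    exact (Set.disjoint_left.1 hdd (hcenter w hw)) (hcenter w hw)
  have hcls : ∀ w, IsW w → ∃ m, Cls m w := by
    intro w hw
    have hw2 : 0 < w.2 := hw.1
    have hwT : w.2 ≤ T := hrT w.1 w.2 hw.1 hw.2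
    have hex : ∃ m : ℕ, T/2^(m+1) < w.2 := by
      obtain ⟨n, hn⟩ := exists_pow_lt_of_lt_one (div_pos hw2 hT0) (by norm_num : (1:ℝ)/2 < 1)
      refine ⟨n, ?_⟩
      have h1 : ((1:ℝ)/2)^n = 1/2^n := by rw [div_pow, one_pow]
      rw [h1] at hn
      have h2 : (1/(2:ℝ)^n) * T < w.2 := (lt_div_iff₀ hT0).1 hn
      have h3 : T/2^(n+1) ≤ T/2^n := by
        apply div_le_div_of_nonneg_left hT0.le (by positivity)
        exact pow_le_pow_right₀ (by norm_num) (Nat.le_succ n)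
      calc T/2^(n+1) ≤ T/2^n := h3
        _ = (1/2^n) * T := by ring
        _ < w.2 := h2
    refine ⟨Nat.find hex, Nat.find_spec hex, ?_⟩
    rcases Nat.eq_zero_or_pos (Nat.find hex) with h|h
    · rw [h]
      simpa using hwT
    · obtain ⟨j, hj⟩ : ∃ j, Nat.find hex = j + 1 := ⟨Nat.find hex - 1, by omega⟩
      have h5 := Nat.find_min hex (show j < Nat.find hex by omega)
      rw [hj]
      exact not_lt.1 h5
  have hBoundtop : C₃ * (A * tb⁻¹) ^ s ≠ ∞ :=
    ENNReal.mul_ne_top hC₃top (ENNReal.rpow_ne_top_of_nonneg hs0.le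
      (ENNReal.mul_ne_top hAtop (ENNReal.inv_ne_top.2 htb0)))
  -- existence of maximal selections at each scale
  have hexSel : ∀ (m : ℕ) (F : Finset (X×ℝ)), ∃ S : Finset (X×ℝ),
      (∀ w ∈ S, IsW w ∧ Cls m w) ∧ ((↑S : Set (X×ℝ)).Pairwise Dis) ∧
      (∀ w ∈ S, ∀ v ∈ F, Dis w v) ∧
      (∀ w, IsW w → Cls m w → (∀ v ∈ F, Dis w v) → ∃ v ∈ S, ¬ Dis w v) := by
    intro m F
    set GoodS := {S : Finset (X×ℝ) | (∀ w ∈ S, IsW w ∧ Cls m w) ∧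
      ((↑S : Set (X×ℝ)).Pairwise Dis) ∧ ∀ w ∈ S, ∀ v ∈ F, Dis w v} with hGoodSdef
    have hT2m : (0:ℝ) < T/2^(m+1) := by positivity
    set δ := ENNReal.ofReal (a * φ (T/2^(m+1))) with hδdef
    have hδ0 : δ ≠ 0 := by
      have := hφpos _ hT2m
      exact (ENNReal.ofReal_pos.2 (by positivity)).ne'
    have hδtop : δ ≠ ∞ := ENNReal.ofReal_ne_top
    have hdelta : ∀ w : X × ℝ, IsW w → Cls m w → δ ≤ μ (ball d w.1 w.2) := by
      intro w hw hc
      refine le_trans ?_ (hμφ w.1 w.2 hw.1).1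
      apply ENNReal.ofReal_le_ofReal
      exact mul_le_mul_of_nonneg_left
        (hφmono (mem_Ioi.2 hT2m) (mem_Ioi.2 hw.1) hc.1.le) ha.le
    have hNbd : ∀ S ∈ GoodS, S.card ≤ ⌊(δ⁻¹ * (C₃*(A*tb⁻¹)^s)).toReal⌋₊ := by
      intro S hS
      obtain ⟨hS1, hS2, hS3⟩ := hS
      have h1 : S.card • δ ≤ ∑ w ∈ S, μ (ball d w.1 w.2) :=
        Finset.card_nsmul_le_sum S _ δ (fun w hw => hdelta w (hS1 w hw).1 (hS1 w hw).2)
      rw [nsmul_eq_mul] at h1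
      have h2 : (S.card : ℝ≥0∞) * δ ≤ C₃*(A*tb⁻¹)^s :=
        h1.trans (core S (fun w hw => (hS1 w hw).1) hS2)
      rw [mul_comm] at h2
      have h3 := cancel_left hδ0 hδtop h2
      apply Nat.le_floor
      have h4 := ENNReal.toReal_mono
        (ENNReal.mul_ne_top (ENNReal.inv_ne_top.2 hδ0) hBoundtop) h3
      simpa using h4
    have h0G : (∅ : Finset (X×ℝ)) ∈ GoodS := by
      refine ⟨by simp, by simp, by simp⟩
    have hbdd : BddAbove {n | ∃ S ∈ GoodS, S.card = n} := by
      refine ⟨⌊(δ⁻¹ * (C₃*(A*tb⁻¹)^s)).toReal⌋₊, ?_⟩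
      rintro n ⟨S, hS, rfl⟩
      exact hNbd S hS
    have hne : {n | ∃ S ∈ GoodS, S.card = n}.Nonempty := ⟨0, ∅, h0G, rfl⟩
    have hmem := Nat.sSup_mem hne hbdd
    obtain ⟨S, hSGood, hScard⟩ := hmem
    obtain ⟨hS1, hS2, hS3⟩ := hSGood
    refine ⟨S, hS1, hS2, hS3, ?_⟩
    intro w hw hcl hdisF
    by_contra hcon
    push_neg at hcon
    have hwS : w ∉ S := fun hmem' => hndisself w hw (hcon w hmem')
    have hins : insert w S ∈ GoodS := by
      refine ⟨?_, ?_, ?_⟩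
      · intro v hv
        rcases Finset.mem_insert.1 hv with h|h
        · subst h; exact ⟨hw, hcl⟩
        · exact hS1 v h
      · rw [Finset.coe_insert]
        exact Set.pairwise_insert.2 ⟨hS2, fun v hv _ => ⟨hcon v hv, hDsymm (hcon v hv)⟩⟩
      · intro u hu v hv
        rcases Finset.mem_insert.1 hu with h|h
        · subst h; exact hdisF v hv
        · exact hS3 u h v hv
    have hle := le_csSup hbdd ⟨insert w S, hins, rfl⟩
    rw [Finset.card_insert_of_notMem hwS, hScard] at hle
    omega
  -- the recursive greedy construction
  choose Sel hSelspec using hexSel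
  obtain ⟨acc, hacc0, haccS⟩ : ∃ acc : ℕ → Finset (X×ℝ), acc 0 = Sel 0 ∅ ∧
      ∀ m, acc (m+1) = acc m ∪ Sel (m+1) (acc m) :=
    ⟨fun n => Nat.rec (Sel 0 ∅) (fun m prev => prev ∪ Sel (m+1) prev) n, rfl, fun m => rfl⟩
  have haccmono : ∀ m n, m ≤ n → acc m ⊆ acc n := by
    intro m n hmn
    induction n with
    | zero => rw [Nat.le_zero.1 hmn]
    | succ k ih =>
        rcases Nat.lt_or_ge m (k+1) with h|h
        · rw [haccS]
          exact (ih (Nat.lt_succ_iff.1 h)).trans Finset.subset_union_left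
        · rw [Nat.le_antisymm hmn h]
  have hinv : ∀ m, (∀ w ∈ acc m, IsW w ∧ ∃ k, k ≤ m ∧ Cls k w) ∧
      ((↑(acc m) : Set (X×ℝ)).Pairwise Dis) := by
    intro m
    induction m with
    | zero =>
        rw [hacc0]
        exact ⟨fun w hw => ⟨((hSelspec 0 ∅).1 w hw).1, 0, le_rfl, ((hSelspec 0 ∅).1 w hw).2⟩,
          (hSelspec 0 ∅).2.1⟩
    | succ m ih =>
        rw [haccS]
        constructor
        · intro w hw
          rcases Finset.mem_union.1 hw with h|h
          · obtain ⟨h1, k, hk, h2⟩ := ih.1 w h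
            exact ⟨h1, k, hk.trans (Nat.le_succ m), h2⟩
          · exact ⟨((hSelspec (m+1) (acc m)).1 w h).1, m+1, le_rfl,
              ((hSelspec (m+1) (acc m)).1 w h).2⟩
        · rw [Finset.coe_union]
          intro u hu v hv huv
          rcases hu with h1|h1 <;> rcases hv with h2|h2
          all_goals first
          | exact ih.2 h1 h2 huv
          | exact (hSelspec (m+1) (acc m)).2.1 h1 h2 huv
          | exact hDsymm ((hSelspec (m+1) (acc m)).2.2.1 v (Finset.mem_coe.1 h2) u
              (Finset.mem_coe.1 h1))
          | exact (hSelspec (m+1) (acc m)).2.2.1 u (Finset.mem_coe.1 h1) v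
              (Finset.mem_coe.1 h2)
  have hcover : ∀ m w, IsW w → Cls m w → ∃ v ∈ acc m, ¬ Dis w v := by
    intro m w hw hc
    cases m with
    | zero =>
        obtain ⟨v, hv, hnd⟩ := (hSelspec 0 ∅).2.2.2 w hw hc (by simp)
        exact ⟨v, by rw [hacc0]; exact hv, hnd⟩
    | succ m =>
        by_cases hd : ∀ v ∈ acc m, Dis w v
        · obtain ⟨v, hv, hnd⟩ := (hSelspec (m+1) (acc m)).2.2.2 w hw hc hd
          exact ⟨v, by rw [haccS]; exact Finset.mem_union_right _ hv, hnd⟩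
        · push_neg at hd
          obtain ⟨v, hv, hnd⟩ := hd
          exact ⟨v, by rw [haccS]; exact Finset.mem_union_left _ hv, hnd⟩
  -- stage sets
  obtain ⟨Sm, hSm0, hSmS⟩ : ∃ Sm : ℕ → Finset (X×ℝ), Sm 0 = acc 0 ∧
      ∀ m, Sm (m+1) = Sel (m+1) (acc m) :=
    ⟨fun n => Nat.rec (acc 0) (fun m _ => Sel (m+1) (acc m)) n, rfl, fun m => rfl⟩
  have hSmsub : ∀ m, Sm m ⊆ acc m := by
    intro m
    cases m with
    | zero => rw [hSm0]
    | succ m => rw [hSmS, haccS]; exact Finset.subset_union_right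
  have hmemSm : ∀ m w, w ∈ acc m → ∃ k, k ≤ m ∧ w ∈ Sm k := by
    intro m
    induction m with
    | zero => intro w hw; exact ⟨0, le_rfl, by rw [hSm0]; exact hw⟩
    | succ m ih =>
        intro w hw
        rw [haccS] at hw
        rcases Finset.mem_union.1 hw with h|h
        · obtain ⟨k, hk, h2⟩ := ih w h
          exact ⟨k, hk.trans (Nat.le_succ m), h2⟩
        · exact ⟨m+1, le_rfl, by rw [hSmS]; exact h⟩
  -- covering of the level set
  have hEcover : {x | tb < maxOp d μ q β (en f) x} ⊆
      ⋃ m : ℕ, ⋃ v ∈ Sm m, ball d v.1 (κ*(1+4*κ)*v.2) := by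
    intro x hx
    obtain ⟨z, r, hr, hxb, hv⟩ := hwit x hx
    have hIsWx : IsW (z, r) := ⟨hr, hv⟩
    obtain ⟨m, hm⟩ := hcls (z,r) hIsWx
    obtain ⟨v, hvacc, hnd⟩ := hcover m (z,r) hIsWx hm
    obtain ⟨u, hu1, hu2⟩ := Set.not_disjoint_iff.1 hnd
    obtain ⟨hIsWv, k, hk, hck⟩ := (hinv m).1 v hvacc
    have hv20 : 0 < v.2 := hIsWv.1
    have hv2 : T/2^(m+1) < v.2 := by
      refine lt_of_le_of_lt ?_ hck.1
      apply div_le_div_of_nonneg_left hT0.le (by positivity)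
      exact pow_le_pow_right₀ (by norm_num) (by omega)
    have hr2 : r ≤ 2*v.2 := by
      have h1 : r ≤ T/2^m := hm.2
      have h2 : T/2^m = 2*(T/2^(m+1)) := by
        field_simp
        ring
      rw [h2] at h1
      linarith
    obtain ⟨k', hk', hvSm⟩ := hmemSm m v hvacc
    refine mem_iUnion.2 ⟨k', mem_iUnion₂.2 ⟨v, hvSm, ?_⟩⟩
    show d v.1 x < κ*(1+4*κ)*v.2
    have h3 : d v.1 x ≤ κ*(d v.1 u + d u x) := hdtri v.1 u x
    have h4 : d v.1 u < v.2 := hu2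
    have h5 : d u x ≤ κ*(d u z + d z x) := hdtri u z x
    have h6 : d u z < r := by rw [← hdsym]; exact hu1
    have h7 : d z x < r := hxb
    have h8 : d u x < 4*κ*v.2 := by
      have h9 : d u x < κ*(r+r) := lt_of_le_of_lt h5
        (mul_lt_mul_of_pos_left (by linarith) hκ0)
      have h10 : 2*κ*r ≤ 2*κ*(2*v.2) :=
        mul_le_mul_of_nonneg_left hr2 (by positivity)
      calc d u x < κ*(r+r) := h9
        _ = 2*κ*r := by ring
        _ ≤ 2*κ*(2*v.2) := h10
        _ = 4*κ*v.2 := by ring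
    calc d v.1 x ≤ κ*(d v.1 u + d u x) := h3
      _ < κ*(v.2 + 4*κ*v.2) := mul_lt_mul_of_pos_left (by linarith) hκ0
      _ = κ*(1+4*κ)*v.2 := by ring
  -- dilate bound
  have hdilate : ∀ v : X × ℝ, 0 < v.2 →
      μ (ball d v.1 (κ*(1+4*κ)*v.2)) ≤ Kc * μ (ball d v.1 v.2) := by
    intro v hv2
    have hcb := ball_compare d μ Cμ hdoub φ hφmono a b ha hb hμφ v.1 v.1 v.2
      (κ*(1+4*κ)*v.2) N hv2 (by positivity)
      (mul_le_mul_of_nonneg_right hc₀N hv2.le)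
    rw [hKcdef, mul_assoc]
    rw [mul_assoc] at hcb
    exact hcb
  -- the cross-scale disjointness of the stage sets
  have hSmdisj : ∀ k l, k < l → ∀ w, w ∈ Sm k → w ∉ Sm l := by
    intro k l hkl w hwk hwl
    cases l with
    | zero => omega
    | succ l =>
        rw [hSmS] at hwl
        have hIsWw := ((hSelspec (l+1) (acc l)).1 w hwl).1
        have hwacc : w ∈ acc l := haccmono k l (by omega) ((hSmsub k) hwk)
        exact hndisself w hIsWw ((hSelspec (l+1) (acc l)).2.2.1 w hwl w hwacc)
  -- sum over any finite union of stages is controlled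
  have hsumstage : ∀ I : Finset ℕ,
      ∑ m ∈ I, ∑ v ∈ Sm m, μ (ball d v.1 v.2) ≤ C₃ * (A * tb⁻¹) ^ s := by
    intro I
    have hpd : (↑I : Set ℕ).PairwiseDisjoint Sm := by
      intro k hk l hl hkl
      simp only [Function.onFun]
      rw [Finset.disjoint_left]
      intro w hwk hwl
      rcases Nat.lt_or_ge k l with h|h
      · exact hSmdisj k l h w hwk hwl
      · exact hSmdisj l k (by omega) w hwl hwk
    rw [← Finset.sum_biUnion hpd]
    apply core
    · intro w hw
      obtain ⟨m, hmI, hwm⟩ := Finset.mem_biUnion.1 hw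
      exact ((hinv m).1 w ((hSmsub m) hwm)).1
    · intro u hu v hv huv
      obtain ⟨k, hkI, hku⟩ := Finset.mem_biUnion.1 (Finset.mem_coe.1 hu)
      obtain ⟨l, hlI, hlv⟩ := Finset.mem_biUnion.1 (Finset.mem_coe.1 hv)
      have h1 : u ∈ acc (max k l) := haccmono k _ (le_max_left k l) ((hSmsub k) hku)
      have h2 : v ∈ acc (max k l) := haccmono l _ (le_max_right k l) ((hSmsub l) hlv)
      exact (hinv (max k l)).2 (Finset.mem_coe.2 h1) (Finset.mem_coe.2 h2) huv
  -- measure of the level set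
  have hmuE : μ {x | tb < maxOp d μ q β (en f) x} ≤ Kc * (C₃ * (A * tb⁻¹) ^ s) := by
    calc μ {x | tb < maxOp d μ q β (en f) x}
        ≤ μ (⋃ m : ℕ, ⋃ v ∈ Sm m, ball d v.1 (κ*(1+4*κ)*v.2)) := measure_mono hEcover
      _ ≤ ∑' m : ℕ, μ (⋃ v ∈ Sm m, ball d v.1 (κ*(1+4*κ)*v.2)) := measure_iUnion_le _
      _ ≤ ∑' m : ℕ, ∑ v ∈ Sm m, μ (ball d v.1 (κ*(1+4*κ)*v.2)) :=
          ENNReal.tsum_le_tsum (fun m => measure_biUnion_finset_le _ _)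
      _ ≤ ∑' m : ℕ, ∑ v ∈ Sm m, Kc * μ (ball d v.1 v.2) := by
          apply ENNReal.tsum_le_tsum
          intro m
          apply Finset.sum_le_sum
          intro v hv
          exact hdilate v (((hinv m).1 v ((hSmsub m) hv)).1).1
      _ = Kc * ∑' m : ℕ, ∑ v ∈ Sm m, μ (ball d v.1 v.2) := by
          rw [← ENNReal.tsum_mul_left]
          exact tsum_congr (fun m => (Finset.mul_sum _ _ _).symm)
      _ ≤ Kc * (C₃ * (A * tb⁻¹) ^ s) := by
          apply mul_le_mul_right
          rw [ENNReal.tsum_eq_iSup_sum]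
          exact iSup_le hsumstage
  -- final assembly
  have hmuE' : μ {x | tb < maxOp d μ q β (en f) x} ^ (s⁻¹)
      ≤ (Kc * C₃) ^ (s⁻¹) * (A * tb⁻¹) := by
    have h1 := ENNReal.rpow_le_rpow hmuE (inv_nonneg.2 hs0.le)
    refine h1.trans (le_of_eq ?_)
    rw [← mul_assoc, ENNReal.mul_rpow_of_nonneg _ _ (inv_nonneg.2 hs0.le),
      ← ENNReal.rpow_mul, mul_inv_cancel₀ hs0.ne', ENNReal.rpow_one]
  have hfintot : (Kc * C₃) ^ (s⁻¹) ≠ ∞ :=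
    ENNReal.rpow_ne_top_of_nonneg (inv_nonneg.2 hs0.le) hKcC₃top
  calc tb * μ {x | tb < maxOp d μ q β (en f) x} ^ (1/s)
      = tb * μ {x | tb < maxOp d μ q β (en f) x} ^ (s⁻¹) := by rw [one_div]
    _ ≤ tb * ((Kc * C₃) ^ (s⁻¹) * (A * tb⁻¹)) := mul_le_mul_right hmuE' _
    _ = (Kc * C₃) ^ (s⁻¹) * A * (tb * tb⁻¹) := by ring
    _ = (Kc * C₃) ^ (s⁻¹) * A := by
        rw [ENNReal.mul_inv_cancel htb0 htbtop, mul_one]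
    _ ≤ ENNReal.ofReal (1 + ((Kc * C₃) ^ s⁻¹).toReal) * A := by
        apply mul_le_mul_left
        calc (Kc * C₃) ^ (s⁻¹) = ENNReal.ofReal (((Kc * C₃) ^ (s⁻¹)).toReal) :=
              (ENNReal.ofReal_toReal hfintot).symm
          _ ≤ ENNReal.ofReal (1 + ((Kc * C₃) ^ s⁻¹).toReal) :=
              ENNReal.ofReal_le_ofReal (by linarith)





end HT
end
end

section
/- Let (X,d,μ) be a space of homogeneous type with quasi-metric constant κ and doubling exponent D_μ, 0 < γ < 1, and f a nonnegative measurable function supported in a ball B₀. Then for every x ∈ X ∖ 3κB₀, I_γ f(x) ≤ L · M_{1,1/γ} f(x), where L = C_μ (2κ + 4κ²)^{(1−γ)D_μ} is a constant depending only on γ and the structure constants of X. -/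
open MeasureTheory ENNReal Set Filter

noncomputable section

namespace HT

variable {X : Type*} [MeasurableSpace X]

/-- If `f ≥ 0` is supported in a ball `B₀ = B(x₀,k₀)`, then for every
`x ∉ 3κB₀`, `I_γ f(x) ≤ L · M_{1,1/γ} f(x)` with `L = C_μ (2κ + 4κ²)^{(1−γ)D_μ}`. -/
theorem ifrac_le_maxOp_outside
    (d : X → X → ℝ) (μ : Measure X) (κ : ℝ) (hκ : 1 ≤ κ)
    (hd0 : ∀ x, d x x = 0) (hdpos : ∀ x y, 0 ≤ d x y) (hdsym : ∀ x y, d x y = d y x)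
    (hdtri : ∀ x y z, d x z ≤ κ * (d x y + d y z))
    (hballm : ∀ x r, MeasurableSet (ball d x r))
    (Cμ Dμ : ℝ) (hCμ : 1 ≤ Cμ) (hDμ : 0 ≤ Dμ)
    (hdoub : ∀ x₁ x₂ r₁ r₂, 0 < r₂ → r₂ ≤ r₁ → ball d x₂ r₂ ⊆ ball d x₁ r₁ →
      μ (ball d x₁ r₁) ≤ ENNReal.ofReal (Cμ * (r₁ / r₂) ^ Dμ) * μ (ball d x₂ r₂))
    (hfin : ∀ x r, 0 < r → μ (ball d x r) < ∞)
    (γ : ℝ) (hγ0 : 0 < γ) (hγ1 : γ < 1)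
    (x₀ : X) (k₀ : ℝ) (hk₀ : 0 < k₀)
    (g : X → ℝ≥0∞) (hg : Measurable g) (hsupp : ∀ x, x ∉ ball d x₀ k₀ → g x = 0) :
    ∀ x, x ∉ ball d x₀ (3 * κ * k₀) →
      ifrac d μ γ g x ≤
        ENNReal.ofReal (Cμ * (2 * κ + 4 * κ ^ 2) ^ ((1 - γ) * Dμ)) *
          maxOp d μ 1 (ENNReal.ofReal (1 / γ)) g x := by
  intro x hx
  have hκ0 : (0:ℝ) < κ := lt_of_lt_of_le one_pos hκ
  have hA : 3 * κ * k₀ ≤ d x₀ x := not_lt.mp hx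
  set A := d x₀ x with hAdef
  have hA0 : 0 < A := lt_of_lt_of_le (by positivity) hA
  set R := κ * (A + k₀) with hRdef
  set ρ := A / κ - k₀ with hρdef
  have hR0 : 0 < R := mul_pos hκ0 (by linarith)
  have hρ0 : 0 < ρ := by
    have h3 : 3 * k₀ ≤ A / κ := by rw [le_div_iff₀ hκ0]; nlinarith
    have : (0:ℝ) < 3 * k₀ - k₀ := by linarith
    simp only [hρdef]; linarith
  have hρR : ρ ≤ R := by
    have h1 : A / κ ≤ A := by rw [div_le_iff₀ hκ0]; nlinarith
    have h2 : (0:ℝ) ≤ (κ - 1) * A := mul_nonneg (by linarith) hA0.le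
    rw [hρdef, hRdef]; nlinarith
  have hκρ : κ * ρ = A - κ * k₀ := by
    simp only [hρdef]; field_simp
  have hratio : R / ρ ≤ 2 * κ + 4 * κ ^ 2 := by
    rw [div_le_iff₀ hρ0]
    have key : κ * R ≤ κ * ((2 * κ + 4 * κ ^ 2) * ρ) := by
      have h4 : (0:ℝ) ≤ A - 3 * κ * k₀ := by linarith
      nlinarith [mul_nonneg (by positivity : (0:ℝ) ≤ 2 * κ + 3 * κ ^ 2) h4,
        mul_nonneg (mul_nonneg (sq_nonneg κ) hκ0.le) hk₀.le,
        mul_nonneg (sq_nonneg κ) hk₀.le]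
    exact (mul_le_mul_iff_right₀ hκ0).mp key
  have hbase : 0 < R / ρ := div_pos hR0 hρ0
  have hKarg : 0 < Cμ * (R / ρ) ^ Dμ :=
    mul_pos (by linarith) (Real.rpow_pos_of_pos hbase _)
  set K := ENNReal.ofReal (Cμ * (R / ρ) ^ Dμ) with hKdef
  have hKpos : 0 < K := ENNReal.ofReal_pos.mpr hKarg
  have hKtop : K ≠ ∞ := ENNReal.ofReal_ne_top
  set c := K ^ (1 - γ) with hcdef
  have hc0 : c ≠ 0 := (ENNReal.rpow_pos hKpos hKtop).ne'
  have hcT : c ≠ ∞ := ENNReal.rpow_ne_top_of_nonneg (by linarith) hKtop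
  -- B₀ ⊆ B(x,R)
  have hsub : ball d x₀ k₀ ⊆ ball d x R := by
    intro z hz
    have h1 : d x z ≤ κ * (d x x₀ + d x₀ z) := hdtri x x₀ z
    have h2 : d x x₀ = A := hdsym x x₀
    simp only [ball, mem_setOf_eq] at hz ⊢
    have := mul_lt_mul_of_pos_left (by linarith : d x x₀ + d x₀ z < A + k₀) hκ0
    linarith
  have hxB : x ∈ ball d x R := by
    simp only [ball, mem_setOf_eq, hd0 x]; exact hR0
  have hdoubK : μ (ball d x R) ≤ K * μ (ball d x ρ) :=
    hdoub x x R ρ hρ0 hρR (fun w hw => lt_of_lt_of_le hw hρR)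
  have hsmall : ∀ y, y ∈ ball d x₀ k₀ → ball d x ρ ⊆ ball d x (d x y) := by
    intro y hy w hw
    have h1 : A ≤ κ * (d x₀ y + d y x) := hdtri x₀ y x
    have h2 : d y x = d x y := hdsym y x
    have hy' : d x₀ y < k₀ := hy
    have h3 : A / κ ≤ d x₀ y + d x y := by
      rw [div_le_iff₀ hκ0]; nlinarith
    have hw' : d x w < ρ := hw
    have hρeq : ρ = A / κ - k₀ := hρdef
    have hAeq : A = d x₀ x := hAdef
    show d x w < d x y
    clear_value A R ρ
    linarith
  -- pointwise bound
  have hpt : ∀ y, g y / μ (ball d x (d x y)) ^ (1 - γ) ≤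
      g y * (c * μ (ball d x R) ^ (γ - 1)) := by
    intro y
    by_cases hy : y ∈ ball d x₀ k₀
    · have hμy : μ (ball d x R) ≤ K * μ (ball d x (d x y)) :=
        hdoubK.trans (mul_le_mul_right (μ.mono (hsmall y hy)) K)
      have hab : μ (ball d x R) ^ (1 - γ) ≤ c * μ (ball d x (d x y)) ^ (1 - γ) := by
        calc μ (ball d x R) ^ (1 - γ)
            ≤ (K * μ (ball d x (d x y))) ^ (1 - γ) :=
              ENNReal.rpow_le_rpow hμy (by linarith)
          _ = c * μ (ball d x (d x y)) ^ (1 - γ) :=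
              ENNReal.mul_rpow_of_nonneg _ _ (by linarith)
      have hinv : (μ (ball d x (d x y)) ^ (1 - γ))⁻¹ ≤
          c * (μ (ball d x R) ^ (1 - γ))⁻¹ := by
        have h1 : (c * μ (ball d x (d x y)) ^ (1 - γ))⁻¹ ≤
            (μ (ball d x R) ^ (1 - γ))⁻¹ := ENNReal.inv_le_inv.mpr hab
        calc (μ (ball d x (d x y)) ^ (1 - γ))⁻¹
            = c * (c * μ (ball d x (d x y)) ^ (1 - γ))⁻¹ := by
              rw [ENNReal.mul_inv (Or.inl hc0) (Or.inl hcT), ← mul_assoc,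
                ENNReal.mul_inv_cancel hc0 hcT, one_mul]
          _ ≤ c * (μ (ball d x R) ^ (1 - γ))⁻¹ := mul_le_mul_right h1 c
      have hneg : μ (ball d x R) ^ (γ - 1) = (μ (ball d x R) ^ (1 - γ))⁻¹ := by
        rw [← ENNReal.rpow_neg]; ring_nf
      rw [div_eq_mul_inv, hneg]
      exact mul_le_mul_right hinv (g y)
    · simp [hsupp y hy]
  -- rewrite the integral of g
  have hgind : ∀ y, g y = (ball d x R).indicator g y := by
    intro y
    by_cases h : y ∈ ball d x R
    · simp [h]
    · rw [indicator_of_notMem h, hsupp y (fun hy => h (hsub hy))]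
  have hgint : ∫⁻ y, g y ∂μ = ∫⁻ y in ball d x R, g y ∂μ := by
    rw [← lintegral_indicator (hballm x R)]
    exact lintegral_congr hgind
  -- the maxOp term
  have hγexp : ((ENNReal.ofReal (1 / γ))⁻¹.toReal - ((1:ℝ≥0∞))⁻¹.toReal) = γ - 1 := by
    have h1 : (ENNReal.ofReal (1 / γ))⁻¹.toReal = γ := by
      rw [ENNReal.toReal_inv, ENNReal.toReal_ofReal (by positivity)]
      simp [one_div]
    rw [h1]; simp
  have hlqn : lqn μ 1 (ball d x R) g = ∫⁻ y in ball d x R, g y ∂μ := by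
    simp [lqn]
  have hterm : μ (ball d x R) ^ (γ - 1) * ∫⁻ y in ball d x R, g y ∂μ ≤
      maxOp d μ 1 (ENNReal.ofReal (1 / γ)) g x := by
    refine le_iSup_of_le x (le_iSup_of_le R (le_iSup_of_le hR0 (le_iSup_of_le hxB ?_)))
    rw [hγexp, hlqn]
  have hcL : c ≤ ENNReal.ofReal (Cμ * (2 * κ + 4 * κ ^ 2) ^ ((1 - γ) * Dμ)) := by
    rw [hcdef, hKdef, ENNReal.ofReal_rpow_of_pos hKarg]
    apply ENNReal.ofReal_le_ofReal
    have e1 : (Cμ * (R / ρ) ^ Dμ) ^ (1 - γ) =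
        Cμ ^ (1 - γ) * ((R / ρ) ^ Dμ) ^ (1 - γ) :=
      Real.mul_rpow (by linarith) (Real.rpow_pos_of_pos hbase _).le
    have e2 : ((R / ρ) ^ Dμ) ^ (1 - γ) = (R / ρ) ^ ((1 - γ) * Dμ) := by
      rw [← Real.rpow_mul hbase.le, mul_comm]
    have e3 : Cμ ^ (1 - γ) ≤ Cμ := by
      calc Cμ ^ (1 - γ) ≤ Cμ ^ (1:ℝ) :=
            Real.rpow_le_rpow_of_exponent_le hCμ (by linarith)
        _ = Cμ := Real.rpow_one Cμ
    have e4 : (R / ρ) ^ ((1 - γ) * Dμ) ≤ (2 * κ + 4 * κ ^ 2) ^ ((1 - γ) * Dμ) :=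
      Real.rpow_le_rpow hbase.le hratio (mul_nonneg (by linarith) hDμ)
    rw [e1, e2]
    exact mul_le_mul e3 e4 (Real.rpow_nonneg hbase.le _) (by linarith)
  calc ifrac d μ γ g x
      = ∫⁻ y, g y / μ (ball d x (d x y)) ^ (1 - γ) ∂μ := rfl
    _ ≤ ∫⁻ y, g y * (c * μ (ball d x R) ^ (γ - 1)) ∂μ := lintegral_mono hpt
    _ = (∫⁻ y, g y ∂μ) * (c * μ (ball d x R) ^ (γ - 1)) := lintegral_mul_const _ hg
    _ = (∫⁻ y in ball d x R, g y ∂μ) * (c * μ (ball d x R) ^ (γ - 1)) := by rw [hgint]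
    _ = c * (μ (ball d x R) ^ (γ - 1) * ∫⁻ y in ball d x R, g y ∂μ) := by ring
    _ ≤ ENNReal.ofReal (Cμ * (2 * κ + 4 * κ ^ 2) ^ ((1 - γ) * Dμ)) *
          maxOp d μ 1 (ENNReal.ofReal (1 / γ)) g x := mul_le_mul' hcL hterm

end HT
end
end

section
/- Let Φ be a doubling Young function on a space of homogeneous type (X,d,μ), and 1 < p < ∞. If Φ satisfies the B_p condition, then there exists C > 0 such that ∫_X (M_Φ f(x))^p dμ(x) ≤ C ∫_X f(x)^p dμ(x) for all nonnegative measurable f. -/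
open MeasureTheory ENNReal Set Filter

noncomputable section

namespace HT

variable {X : Type*} [MeasurableSpace X]

/-! ### Auxiliary lemmas -/

lemma my_alg {p c v E : ℝ} (hc : 0 < c) (hv : 0 < v) :
    (c * (v^2)⁻¹) * ((p * (c/v)^(p-1)) * E) = (p * c^p) * (E / v^p / v) := by
  have h1 : (c/v)^(p-1) = c^(p-1) / v^(p-1) := Real.div_rpow hc.le hv.le _
  have h2 : c * c^(p-1) = c^p := by
    calc c * c^(p-1) = c^(1:ℝ) * c^(p-1) := by rw [Real.rpow_one]
      _ = c^(1+(p-1)) := (Real.rpow_add hc _ _).symm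
      _ = c^p := by norm_num
  have h3 : v^(p-1) * v^(2:ℕ) = v^p * v := by
    rw [← Real.rpow_natCast v 2, ← Real.rpow_add hv]
    have he : p - 1 + ((2:ℕ):ℝ) = p + 1 := by push_cast; ring
    rw [he, Real.rpow_add hv, Real.rpow_one]
  have hvp : v^p ≠ 0 := (Real.rpow_pos_of_pos hv p).ne'
  have hvp1 : v^(p-1) ≠ 0 := (Real.rpow_pos_of_pos hv _).ne'
  rw [h1]
  field_simp
  have h4 : v * v^(p-1) = v^p := by
    calc v * v^(p-1) = v^(1:ℝ) * v^(p-1) := by rw [Real.rpow_one]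
      _ = v^(1+(p-1)) := (Real.rpow_add hv _ _).symm
      _ = v^p := by norm_num
  linear_combination (p*E*v^p) * h2 - (p*E*c^p) * h4

lemma my_lintegral_image {s : Set ℝ} {f f' : ℝ → ℝ}
    (hs : MeasurableSet s) (hf' : ∀ x ∈ s, HasDerivWithinAt f (f' x) s x)
    (hf : Set.InjOn f s) (g : ℝ → ℝ≥0∞) :
    ∫⁻ x in f '' s, g x = ∫⁻ x in s, ENNReal.ofReal |f' x| * g (f x) := by
  simpa only [ContinuousLinearMap.det_toSpanSingleton] using
    MeasureTheory.lintegral_image_eq_lintegral_abs_det_fderiv_mul volume hs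
      (fun x hx => (hf' x hx).hasFDerivWithinAt) hf g

lemma my_layercake {α : Type*} [MeasurableSpace α] (μ : Measure α)
    {g : α → ℝ≥0∞} (hg : Measurable g) :
    ∫⁻ x, g x ∂μ ≤ ∫⁻ t in Ioi (0:ℝ), μ {x | ENNReal.ofReal t < g x} := by
  have hsup : ∀ a : ℝ≥0∞, (⨆ n : ℕ, min a n) = a := by
    intro a
    apply le_antisymm (iSup_le fun n => min_le_left _ _)
    rcases eq_or_ne a ∞ with rfl | ha
    · simp only [min_eq_right (le_top : (_:ℝ≥0∞) ≤ ∞)]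
      simp [ENNReal.iSup_natCast]
    · obtain ⟨n, hn⟩ := ENNReal.exists_nat_gt ha
      exact le_trans (min_eq_left hn.le).symm.le (le_iSup (fun n : ℕ => min a n) n)
  have key : ∀ n : ℕ, ∫⁻ x, min (g x) n ∂μ ≤ ∫⁻ t in Ioi (0:ℝ), μ {x | ENNReal.ofReal t < g x} := by
    intro n
    have hne : ∀ x, min (g x) n ≠ ∞ := fun x =>
      ne_top_of_le_ne_top (ENNReal.natCast_ne_top n) (min_le_right _ _)
    have hmeas : Measurable fun x => (min (g x) (n:ℝ≥0∞)).toReal :=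
      (hg.min measurable_const).ennreal_toReal
    have h1 : ∫⁻ x, min (g x) n ∂μ = ∫⁻ x, ENNReal.ofReal ((min (g x) n).toReal) ∂μ := by
      apply lintegral_congr; intro x
      rw [ENNReal.ofReal_toReal (hne x)]
    rw [h1, lintegral_eq_lintegral_meas_lt μ
      (Eventually.of_forall fun x => ENNReal.toReal_nonneg) hmeas.aemeasurable]
    apply lintegral_mono_ae
    filter_upwards [ae_restrict_mem measurableSet_Ioi] with t ht
    apply measure_mono
    intro x hx
    have h2 : ENNReal.ofReal t < min (g x) n := by
      have := (ENNReal.ofReal_lt_ofReal_iff_of_nonneg (le_of_lt ht)).2 hx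
      rwa [ENNReal.ofReal_toReal (hne x)] at this
    exact lt_of_lt_of_le h2 (min_le_left _ _)
  calc ∫⁻ x, g x ∂μ = ∫⁻ x, ⨆ n : ℕ, min (g x) n ∂μ := by
        apply lintegral_congr; intro x; rw [hsup]
    _ = ⨆ n : ℕ, ∫⁻ x, min (g x) n ∂μ :=
        lintegral_iSup (fun n => hg.min measurable_const)
          (fun i j hij x => min_le_min le_rfl (Nat.cast_le.2 hij))
    _ ≤ _ := iSup_le key

lemma my_inner (Φ : ℝ → ℝ) {p t0 c : ℝ} (hp : 0 < p) (ht0 : 0 < t0) (hc : 0 < c) :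
    (∫⁻ s in Ioi (0:ℝ), ENNReal.ofReal (p * s^(p-1)) *
        (if t0 * s < c then ENNReal.ofReal (Φ (max (c / s) 0)) else 0))
      = ENNReal.ofReal (p * c^p) * ∫⁻ v in Ioi t0, ENNReal.ofReal (Φ (max v 0) / v^p / v) := by
  classical
  set L := c / t0 with hL
  set F2 : ℝ → ℝ≥0∞ := fun s => ENNReal.ofReal (p * s^(p-1)) * ENNReal.ofReal (Φ (max (c/s) 0))
    with hF2
  have step1 : (∫⁻ s in Ioi (0:ℝ), ENNReal.ofReal (p * s^(p-1)) *
        (if t0 * s < c then ENNReal.ofReal (Φ (max (c / s) 0)) else 0))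
      = ∫⁻ s in Ioo (0:ℝ) L, F2 s := by
    have hpt : ∀ s ∈ Ioi (0:ℝ), ENNReal.ofReal (p * s^(p-1)) *
        (if t0 * s < c then ENNReal.ofReal (Φ (max (c / s) 0)) else 0)
        = (Ioo (0:ℝ) L).indicator F2 s := by
      intro s hs
      by_cases hcs : t0 * s < c
      · rw [if_pos hcs, indicator_of_mem]
        exact ⟨hs, by rwa [lt_div_iff₀ ht0, mul_comm]⟩
      · rw [if_neg hcs, mul_zero, indicator_of_notMem]
        intro hmem
        exact hcs (by rw [mul_comm]; exact (lt_div_iff₀ ht0).mp hmem.2)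
    rw [setLIntegral_congr_fun measurableSet_Ioi hpt,
      lintegral_indicator measurableSet_Ioo,
      Measure.restrict_restrict measurableSet_Ioo,
      inter_eq_left.mpr Ioo_subset_Ioi_self]
  have himg : Ioo (0:ℝ) L = (fun v => c * v⁻¹) '' Ioi t0 := by
    ext s
    constructor
    · rintro ⟨hs0, hsL⟩
      refine ⟨c / s, ?_, ?_⟩
      · have h : s * t0 < c := by
          have := (lt_div_iff₀ ht0).mp hsL; linarith [this]
        exact (lt_div_iff₀ hs0).mpr (by linarith)
      · show c * (c / s)⁻¹ = s
        rw [← div_eq_mul_inv, div_div_cancel₀ hc.ne']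
    · rintro ⟨v, hv, rfl⟩
      have hv0 : 0 < v := ht0.trans hv
      constructor
      · show (0:ℝ) < c * v⁻¹
        positivity
      · show c * v⁻¹ < L
        rw [← div_eq_mul_inv]
        exact div_lt_div_of_pos_left hc ht0 hv
  have hderiv : ∀ v ∈ Ioi t0, HasDerivWithinAt (fun v => c * v⁻¹) (c * (-(v^2)⁻¹)) (Ioi t0) v :=
    fun v hv => ((hasDerivAt_inv (ne_of_gt (ht0.trans hv))).const_mul c).hasDerivWithinAt
  have hinj : InjOn (fun v => c * v⁻¹) (Ioi t0) := by
    intro a ha b hb h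
    have h2 := mul_left_cancel₀ hc.ne' h
    exact inv_injective h2
  rw [step1, himg, my_lintegral_image measurableSet_Ioi hderiv hinj F2]
  have hpt2 : ∀ v ∈ Ioi t0, ENNReal.ofReal |c * (-(v^2)⁻¹)| * F2 (c * v⁻¹)
      = ENNReal.ofReal (p * c^p) * ENNReal.ofReal (Φ (max v 0) / v^p / v) := by
    intro v hv
    have hv0 : 0 < v := ht0.trans hv
    have habs : |c * (-(v^2)⁻¹)| = c * (v^2)⁻¹ := by
      rw [abs_mul, abs_of_pos hc, abs_neg, abs_of_pos (inv_pos.2 (pow_pos hv0 2))]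
    have harg : max (c / (c * v⁻¹)) 0 = v := by
      rw [← div_eq_mul_inv, div_div_cancel₀ hc.ne']
      exact max_eq_left hv0.le
    have hmaxv : max v 0 = v := max_eq_left hv0.le
    have hcv : (0:ℝ) < c * v⁻¹ := by positivity
    rw [habs, hF2]
    simp only [harg]
    rw [← ENNReal.ofReal_mul (by positivity : (0:ℝ) ≤ p * (c * v⁻¹)^(p-1)),
      ← ENNReal.ofReal_mul (by positivity : (0:ℝ) ≤ c * (v^2)⁻¹)]
    rw [show c * v⁻¹ = c / v from (div_eq_mul_inv c v).symm, my_alg hc hv0,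
      ENNReal.ofReal_mul (by positivity : (0:ℝ) ≤ p * c^p), hmaxv]
  rw [setLIntegral_congr_fun measurableSet_Ioi hpt2,
    lintegral_const_mul' _ _ ENNReal.ofReal_ne_top]

lemma my_vitali_weak {X : Type*} [MeasurableSpace X] (d : X → X → ℝ) (μ ν : Measure X)
    (κ : ℝ) (hκ : 1 ≤ κ) (hd0 : ∀ x, d x x = 0)
    (hdsym : ∀ x y, d x y = d y x) (hdtri : ∀ x y z, d x z ≤ κ * (d x y + d y z))
    (hballm : ∀ x r, MeasurableSet (ball d x r)) (Cμ : ℝ)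
    (hdoub : ∀ x r, 0 < r → μ (ball d x (2 * r)) ≤ ENNReal.ofReal Cμ * μ (ball d x r))
    (k : ℕ) (hk : 5 * κ ^ 2 ≤ 2 ^ k) (hν : ν univ ≠ ∞) (T' : Set (X × ℝ)) (R : ℝ)
    (hT : ∀ a ∈ T', 0 < a.2 ∧ a.2 ≤ R ∧
      μ (ball d a.1 a.2) ≤ 2 * ν (ball d a.1 a.2) ∧ 0 < ν (ball d a.1 a.2)) :
    μ (⋃ a ∈ T', ball d a.1 a.2) ≤ 2 * (ENNReal.ofReal Cμ) ^ k * ν univ := by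
  have κ0 : (0:ℝ) < κ := lt_of_lt_of_le one_pos hκ
  have hdk : ∀ (j : ℕ) (z : X) (r : ℝ), 0 < r →
      μ (ball d z (2 ^ j * r)) ≤ (ENNReal.ofReal Cμ) ^ j * μ (ball d z r) := by
    intro j
    induction j with
    | zero => intro z r _; simp
    | succ j ih =>
      intro z r hr
      rw [show ((2:ℝ) ^ (j+1) * r) = 2 * (2 ^ j * r) by ring]
      calc μ (ball d z (2 * (2 ^ j * r))) ≤ ENNReal.ofReal Cμ * μ (ball d z (2 ^ j * r)) :=
            hdoub z _ (by positivity)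
        _ ≤ ENNReal.ofReal Cμ * ((ENNReal.ofReal Cμ) ^ j * μ (ball d z r)) :=
            mul_le_mul_right (ih z r hr) _
        _ = (ENNReal.ofReal Cμ) ^ (j+1) * μ (ball d z r) := by rw [pow_succ]; ring
  obtain ⟨u, hut, hdisj, hcov⟩ := Vitali.exists_disjoint_subfamily_covering_enlargement
    (fun a : X × ℝ => ball d a.1 a.2) T' (fun a => a.2) 2 one_lt_two
    (fun a ha => (hT a ha).1.le) R (fun a ha => (hT a ha).2.1)
    (fun a ha => ⟨a.1, show d a.1 a.1 < a.2 by rw [hd0]; exact (hT a ha).1⟩)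
  have hdisj' : Pairwise (Function.onFun Disjoint fun b : ↥u => ball d b.1.1 b.1.2) := by
    intro i j hij
    exact hdisj i.2 j.2 (fun h => hij (Subtype.ext h))
  have hcnt : u.Countable := by
    have hc := MeasureTheory.Measure.countable_meas_pos_of_disjoint_of_meas_iUnion_ne_top
      (μ := ν) (As := fun b : ↥u => ball d b.1.1 b.1.2) (fun _ => hballm _ _) hdisj'
      (ne_top_of_le_ne_top hν (measure_mono (subset_univ _)))
    have heq : {i : ↥u | 0 < ν (ball d i.1.1 i.1.2)} = univ :=
      eq_univ_of_forall (fun b => (hT b.1 (hut b.2)).2.2.2)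
    rw [heq] at hc
    exact Set.countable_coe_iff.mp (Set.countable_univ_iff.mp hc)
  calc μ (⋃ a ∈ T', ball d a.1 a.2)
      ≤ μ (⋃ b ∈ u, ball d b.1 (5 * κ ^ 2 * b.2)) := by
        apply measure_mono
        intro x hx
        simp only [mem_iUnion, exists_prop] at hx ⊢
        obtain ⟨a, haT, hax⟩ := hx
        obtain ⟨b, hbu, ⟨w, hw1, hw2⟩, hab2⟩ := hcov a haT
        refine ⟨b, hbu, ?_⟩
        have hbT := hut hbu
        have hb2 : 0 < b.2 := (hT b hbT).1
        have ha2 : 0 < a.2 := (hT a haT).1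
        have hw1' : d a.1 w < a.2 := hw1
        have hw2' : d b.1 w < b.2 := hw2
        have hx' : d a.1 x < a.2 := hax
        have e1 : d b.1 a.1 < κ * (b.2 + a.2) := by
          calc d b.1 a.1 ≤ κ * (d b.1 w + d w a.1) := hdtri _ _ _
            _ < κ * (b.2 + a.2) := by
                apply mul_lt_mul_of_pos_left _ κ0
                rw [hdsym w a.1]; exact add_lt_add hw2' hw1'
        show d b.1 x < 5 * κ ^ 2 * b.2
        calc d b.1 x ≤ κ * (d b.1 a.1 + d a.1 x) := hdtri _ _ _
          _ < κ * (κ * (b.2 + a.2) + a.2) :=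
              mul_lt_mul_of_pos_left (add_lt_add e1 hx') κ0
          _ ≤ 5 * κ ^ 2 * b.2 := by nlinarith [sq_nonneg κ, mul_pos κ0 hb2, mul_pos κ0 ha2]
    _ ≤ ∑' b : ↥u, μ (ball d b.1.1 (5 * κ ^ 2 * b.1.2)) := measure_biUnion_le μ hcnt _
    _ ≤ ∑' b : ↥u, 2 * (ENNReal.ofReal Cμ) ^ k * ν (ball d b.1.1 b.1.2) := by
        apply ENNReal.tsum_le_tsum
        intro b
        have hbT := hut b.2
        have hb2 : 0 < b.1.2 := (hT b.1 hbT).1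
        calc μ (ball d b.1.1 (5 * κ ^ 2 * b.1.2))
            ≤ μ (ball d b.1.1 (2 ^ k * b.1.2)) := by
              apply measure_mono
              intro y hy
              exact lt_of_lt_of_le hy (mul_le_mul_of_nonneg_right hk hb2.le)
          _ ≤ (ENNReal.ofReal Cμ) ^ k * μ (ball d b.1.1 b.1.2) := hdk k _ _ hb2
          _ ≤ (ENNReal.ofReal Cμ) ^ k * (2 * ν (ball d b.1.1 b.1.2)) :=
              mul_le_mul_right (hT b.1 hbT).2.2.1 _
          _ = 2 * (ENNReal.ofReal Cμ) ^ k * ν (ball d b.1.1 b.1.2) := by ring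
    _ = 2 * (ENNReal.ofReal Cμ) ^ k * ∑' b : ↥u, ν (ball d b.1.1 b.1.2) :=
        ENNReal.tsum_mul_left
    _ = 2 * (ENNReal.ofReal Cμ) ^ k * ν (⋃ b ∈ u, ball d b.1 b.2) := by
        rw [measure_biUnion hcnt hdisj (fun b _ => hballm _ _)]
    _ ≤ 2 * (ENNReal.ofReal Cμ) ^ k * ν univ :=
        mul_le_mul_right (measure_mono (subset_univ _)) _

/-- If `Φ` is a doubling Young function satisfying the `B_p` condition
(`1 < p < ∞`), then the Orlicz maximal operator `M_Φ` is bounded on `L^p(X,μ)`: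
`∫ (M_Φ f)^p dμ ≤ C ∫ f^p dμ` for all nonnegative `f`. -/
theorem orlicz_maximal_Lp_bound
    (d : X → X → ℝ) (μ : Measure X) (κ : ℝ) (hκ : 1 ≤ κ)
    (hd0 : ∀ x, d x x = 0) (hdpos : ∀ x y, 0 ≤ d x y) (hdsym : ∀ x y, d x y = d y x)
    (hdtri : ∀ x y z, d x z ≤ κ * (d x y + d y z))
    (hballm : ∀ x r, MeasurableSet (ball d x r))
    (Cμ : ℝ) (hCμ : 1 ≤ Cμ)
    (hdoub : ∀ x r, 0 < r → μ (ball d x (2 * r)) ≤ ENNReal.ofReal Cμ * μ (ball d x r))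
    (hfin : ∀ x r, 0 < r → μ (ball d x r) < ∞)
    (Φ : ℝ → ℝ) (hΦc : ContinuousOn Φ (Ici 0)) (hΦm : MonotoneOn Φ (Ici 0))
    (hΦcv : ConvexOn ℝ (Ici 0) Φ) (hΦ0 : Φ 0 = 0) (hΦnn : ∀ t, 0 ≤ t → 0 ≤ Φ t)
    (hΦtop : Tendsto Φ atTop atTop)
    (CΦ : ℝ) (hΦdoub : ∀ t : ℝ, 0 ≤ t → Φ (2 * t) ≤ CΦ * Φ t)
    (p : ℝ) (hp1 : 1 < p)
    (hBp : ∃ a : ℝ, 0 < a ∧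
      (∫⁻ t in Ioi a, ENNReal.ofReal (Φ t / t ^ p / t)) < ∞) :
    ∃ C > (0 : ℝ), ∀ f : X → ℝ, Measurable f → (∀ x, 0 ≤ f x) →
      (∫⁻ x, (⨆ (z : X) (r : ℝ) (_ : 0 < r) (_ : x ∈ ball d z r),
          luxN μ (fun t => ENNReal.ofReal (Φ t)) (ball d z r) (en f)) ^ p ∂μ) ≤
        ENNReal.ofReal C * ∫⁻ x, ENNReal.ofReal (f x) ^ p ∂μ := by
  classical
  have hp0 : (0:ℝ) < p := lt_trans one_pos hp1
  have hp0' : p ≠ 0 := hp0.ne'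
  -- choose t0 > 0 with Φ t0 ≤ 1/2
  obtain ⟨t0, ht0pos, ht0le⟩ : ∃ t0 : ℝ, 0 < t0 ∧ Φ t0 ≤ 1/2 := by
    have h0 : ContinuousWithinAt Φ (Ici 0) 0 := hΦc 0 (mem_Ici.2 le_rfl)
    have hev : ∀ᶠ t in nhdsWithin 0 (Ici 0), Φ t < 1/2 := by
      have ht := h0.tendsto
      rw [hΦ0] at ht
      exact ht.eventually_lt_const (by norm_num)
    rcases mem_nhdsWithin.mp hev with ⟨U, hUopen, hU0, hU⟩
    rcases Metric.isOpen_iff.mp hUopen 0 hU0 with ⟨ε, hε, hball⟩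
    refine ⟨ε/2, by linarith, ?_⟩
    have hmem : (ε/2) ∈ U ∩ Ici 0 := by
      constructor
      · apply hball
        rw [Metric.mem_ball, Real.dist_eq, sub_zero, abs_of_pos (by linarith)]
        linarith
      · exact mem_Ici.2 (by linarith)
    exact (hU hmem).le
  -- the tail integral K is finite
  set K : ℝ≥0∞ := ∫⁻ v in Ioi t0, ENNReal.ofReal (Φ v / v ^ p / v) with hKdef
  obtain ⟨a, ha0, haI⟩ := hBp
  have hKne : K ≠ ∞ := by
    rcases le_or_gt a t0 with hat | hat
    · refine ne_of_lt (lt_of_le_of_lt ?_ haI)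
      exact lintegral_mono' (Measure.restrict_mono (Ioi_subset_Ioi hat) le_rfl) (le_refl _)
    · have hsplit : Ioi t0 = Ioc t0 a ∪ Ioi a := (Ioc_union_Ioi_eq_Ioi hat.le).symm
      rw [hKdef, hsplit, lintegral_union measurableSet_Ioi (Ioc_disjoint_Ioi le_rfl)]
      apply ne_of_lt
      apply ENNReal.add_lt_top.mpr
      constructor
      · have hb : ∀ v ∈ Ioc t0 a, ENNReal.ofReal (Φ v / v ^ p / v)
            ≤ ENNReal.ofReal (Φ a / t0 ^ p / t0) := by
          intro v hv
          apply ENNReal.ofReal_le_ofReal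
          have hv0 : 0 < v := ht0pos.trans hv.1
          have h1 : Φ v ≤ Φ a := hΦm (mem_Ici.2 hv0.le) (mem_Ici.2 (ha0.le)) hv.2
          have ht0p : 0 < t0 ^ p := Real.rpow_pos_of_pos ht0pos p
          have h2 : t0 ^ p ≤ v ^ p := Real.rpow_le_rpow ht0pos.le hv.1.le hp0.le
          have hΦa : 0 ≤ Φ a := hΦnn a ha0.le
          exact div_le_div₀ (div_nonneg hΦa ht0p.le)
            (div_le_div₀ hΦa h1 ht0p h2) ht0pos hv.1.le
        calc ∫⁻ v in Ioc t0 a, ENNReal.ofReal (Φ v / v ^ p / v)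
            ≤ ∫⁻ _ in Ioc t0 a, ENNReal.ofReal (Φ a / t0 ^ p / t0) := by
              apply lintegral_mono_ae
              filter_upwards [ae_restrict_mem measurableSet_Ioc] with v hv
              exact hb v hv
          _ = ENNReal.ofReal (Φ a / t0 ^ p / t0) * volume (Ioc t0 a) := setLIntegral_const _ _
          _ < ∞ := by
              rw [Real.volume_Ioc]
              exact ENNReal.mul_lt_top ENNReal.ofReal_lt_top ENNReal.ofReal_lt_top
      · exact haI
  -- doubling exponent
  obtain ⟨k, hk⟩ := pow_unbounded_of_one_lt (5 * κ ^ 2) (one_lt_two (α := ℝ))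
  set D : ℝ≥0∞ := (ENNReal.ofReal Cμ) ^ k with hDdef
  have hDne : D ≠ ∞ := by
    rw [hDdef]; exact ENNReal.pow_ne_top ENNReal.ofReal_ne_top
  have hD0 : D ≠ 0 := by
    rw [hDdef]
    exact pow_ne_zero k (ENNReal.ofReal_pos.mpr (lt_of_lt_of_le one_pos hCμ)).ne'
  set Ctot : ℝ≥0∞ := 2 * D * (ENNReal.ofReal p * K) with hCtotdef
  have hCtotne : Ctot ≠ ∞ := by
    rw [hCtotdef]
    exact ENNReal.mul_ne_top (ENNReal.mul_ne_top (by norm_num) hDne)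
      (ENNReal.mul_ne_top ENNReal.ofReal_ne_top hKne)
  have hCle : Ctot ≤ ENNReal.ofReal (Ctot.toReal + 1) := by
    calc Ctot = ENNReal.ofReal Ctot.toReal := (ENNReal.ofReal_toReal hCtotne).symm
      _ ≤ _ := ENNReal.ofReal_le_ofReal (by linarith [ENNReal.toReal_nonneg (a := Ctot)])
  refine ⟨Ctot.toReal + 1, by positivity, ?_⟩
  intro f hf hf0
  set G : X → ℝ≥0∞ := fun x => ⨆ (z : X) (r : ℝ) (_ : 0 < r) (_ : x ∈ ball d z r),
      luxN μ (fun t => ENNReal.ofReal (Φ t)) (ball d z r) (en f) with hGdef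
  show (∫⁻ x, G x ^ p ∂μ) ≤ ENNReal.ofReal (Ctot.toReal + 1) * ∫⁻ x, ENNReal.ofReal (f x) ^ p ∂μ
  by_cases hfp : (∫⁻ x, ENNReal.ofReal (f x) ^ p ∂μ) = ∞
  · rw [hfp, ENNReal.mul_top (ENNReal.ofReal_pos.mpr (by positivity)).ne']
    exact le_top
  -- definitions depending on f
  set Q : ℝ → ℝ≥0∞ := fun t => ENNReal.ofReal (Φ (max t 0)) with hQdef
  have hQmeas : Measurable Q := by
    have hmono : Monotone fun t : ℝ => Φ (max t 0) := fun a b hab =>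
      hΦm (mem_Ici.2 (le_max_right a 0)) (mem_Ici.2 (le_max_right b 0)) (max_le_max hab le_rfl)
    exact hmono.measurable.ennreal_ofReal
  set hfun : ℝ → X → ℝ≥0∞ := fun s x => if t0 * s < f x then Q (f x / s) else 0 with hhfun
  have hfunmeas : ∀ s, Measurable (hfun s) := fun s =>
    Measurable.ite (measurableSet_lt measurable_const hf)
      (hQmeas.comp (hf.div_const s)) measurable_const
  set ν : ℝ → Measure X := fun s => μ.withDensity (hfun s) with hνdef
  have hνapp : ∀ (s : ℝ) (B : Set X), MeasurableSet B → ν s B = ∫⁻ x in B, hfun s x ∂μ :=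
    fun s B hB => withDensity_apply _ hB
  -- pointwise splitting estimate
  have hQsplit : ∀ s : ℝ, 0 < s → ∀ y, Q (f y / s) ≤ ENNReal.ofReal (1/2) + hfun s y := by
    intro s hs y
    by_cases hy : t0 * s < f y
    · rw [hhfun]; simp only [if_pos hy]; exact le_add_self
    · push_neg at hy
      have hdiv : f y / s ≤ t0 := by rw [div_le_iff₀ hs]; linarith [hy]
      have h1 : Φ (max (f y / s) 0) ≤ Φ t0 :=
        hΦm (mem_Ici.2 (le_max_right _ 0)) (mem_Ici.2 ht0pos.le) (max_le hdiv ht0pos.le)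
      calc Q (f y / s) ≤ ENNReal.ofReal (1/2) :=
            ENNReal.ofReal_le_ofReal (le_trans h1 ht0le)
        _ ≤ _ := le_self_add
  -- the weak-type estimate
  have hweak : ∀ s : ℝ, 0 < s →
      μ {x | ENNReal.ofReal s < G x} ≤ 2 * D * (ν s univ) := by
    intro s hs
    set T : Set (X × ℝ) := {a | 0 < a.2 ∧
      μ (ball d a.1 a.2) < ∫⁻ y in ball d a.1 a.2, Q (f y / s) ∂μ} with hTdef
    have hsub : {x | ENNReal.ofReal s < G x} ⊆ ⋃ a ∈ T, ball d a.1 a.2 := by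
      intro x hx
      simp only [mem_setOf_eq, hGdef] at hx
      rw [lt_iSup_iff] at hx; obtain ⟨z, hx⟩ := hx
      rw [lt_iSup_iff] at hx; obtain ⟨r, hx⟩ := hx
      rw [lt_iSup_iff] at hx; obtain ⟨hr, hx⟩ := hx
      rw [lt_iSup_iff] at hx; obtain ⟨hxball, hx⟩ := hx
      rw [luxN] at hx
      have hnotmem : ENNReal.ofReal s ∉ {a : ℝ≥0∞ | 0 < a ∧
          ∫⁻ y in ball d z r, ENNReal.ofReal (Φ ((en f y / a).toReal)) ∂μ
            ≤ μ (ball d z r)} := fun hmem => absurd (sInf_le hmem) (not_le.mpr hx)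
      have hcond : ¬ (∫⁻ y in ball d z r,
          ENNReal.ofReal (Φ ((en f y / ENNReal.ofReal s).toReal)) ∂μ ≤ μ (ball d z r)) :=
        fun hle => hnotmem ⟨ENNReal.ofReal_pos.mpr hs, hle⟩
      have hint : ∀ y, ENNReal.ofReal (Φ ((en f y / ENNReal.ofReal s).toReal)) = Q (f y / s) := by
        intro y
        have h1 : en f y = ENNReal.ofReal (f y) := by
          simp only [en]
          exact Real.enorm_eq_ofReal (hf0 y)
        rw [h1, ← ENNReal.ofReal_div_of_pos hs,
          ENNReal.toReal_ofReal (div_nonneg (hf0 y) hs.le), hQdef]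
        simp only [max_eq_left (div_nonneg (hf0 y) hs.le)]
      have hTmem : (z, r) ∈ T := by
        refine ⟨hr, ?_⟩
        rw [← lintegral_congr (fun y => (hint y))]
        exact not_le.mp hcond
      exact mem_biUnion hTmem hxball
    by_cases hJ : ν s univ = ∞
    · rw [hJ, ENNReal.mul_top (by simp [hD0])]
      exact le_top
    have hTfact : ∀ a ∈ T, μ (ball d a.1 a.2) ≤ 2 * ν s (ball d a.1 a.2)
        ∧ 0 < ν s (ball d a.1 a.2) := by
      intro a ha
      obtain ⟨hr, hlt⟩ := ha
      have hBmeas : MeasurableSet (ball d a.1 a.2) := hballm _ _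
      have hBpos : 0 < μ (ball d a.1 a.2) := by
        by_contra hc
        push_neg at hc
        have hB0 : μ (ball d a.1 a.2) = 0 := le_antisymm hc (by positivity)
        rw [Measure.restrict_eq_zero.mpr hB0] at hlt
        simp [hB0] at hlt
      have hup : ∫⁻ y in ball d a.1 a.2, Q (f y / s) ∂μ
          ≤ ENNReal.ofReal (1/2) * μ (ball d a.1 a.2) + ν s (ball d a.1 a.2) := by
        calc ∫⁻ y in ball d a.1 a.2, Q (f y / s) ∂μ
            ≤ ∫⁻ y in ball d a.1 a.2, (ENNReal.ofReal (1/2) + hfun s y) ∂μ :=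
              lintegral_mono (fun y => hQsplit s hs y)
          _ = ENNReal.ofReal (1/2) * μ (ball d a.1 a.2) + ν s (ball d a.1 a.2) := by
              rw [lintegral_add_left measurable_const, setLIntegral_const,
                hνapp s _ hBmeas]
      have hhalf : ENNReal.ofReal (1/2) * μ (ball d a.1 a.2) = μ (ball d a.1 a.2) / 2 := by
        rw [one_div, ENNReal.ofReal_inv_of_pos two_pos, ENNReal.ofReal_ofNat,
          ENNReal.div_eq_inv_mul]
      have h2 : μ (ball d a.1 a.2) / 2 < ν s (ball d a.1 a.2) := by
        by_contra hcon
        push_neg at hcon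
        have hlt2 : μ (ball d a.1 a.2) < μ (ball d a.1 a.2) := by
          calc μ (ball d a.1 a.2)
              < ENNReal.ofReal (1/2) * μ (ball d a.1 a.2) + ν s (ball d a.1 a.2) :=
                lt_of_lt_of_le hlt hup
            _ ≤ μ (ball d a.1 a.2) / 2 + μ (ball d a.1 a.2) / 2 := by
                rw [hhalf]; exact add_le_add_right hcon _
            _ = μ (ball d a.1 a.2) := ENNReal.add_halves _
        exact lt_irrefl _ hlt2
      constructor
      · calc μ (ball d a.1 a.2) = 2 * (μ (ball d a.1 a.2) / 2) := by
              rw [ENNReal.mul_div_cancel two_ne_zero ENNReal.ofNat_ne_top]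
          _ ≤ 2 * ν s (ball d a.1 a.2) := mul_le_mul_right h2.le _
      · exact lt_of_lt_of_le (ENNReal.div_pos hBpos.ne' ENNReal.ofNat_ne_top) h2.le
    have hU : (⋃ a ∈ T, ball d a.1 a.2)
        = ⋃ n : ℕ, ⋃ a ∈ {a ∈ T | a.2 ≤ (n:ℝ)}, ball d a.1 a.2 := by
      ext x
      simp only [mem_iUnion, exists_prop, mem_setOf_eq, mem_sep_iff]
      constructor
      · rintro ⟨a, haT, hax⟩
        obtain ⟨n, hn⟩ := exists_nat_ge a.2
        exact ⟨n, a, ⟨haT, hn⟩, hax⟩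
      · rintro ⟨n, a, ⟨haT, _⟩, hax⟩
        exact ⟨a, haT, hax⟩
    have hmono : Monotone fun n : ℕ => ⋃ a ∈ {a ∈ T | a.2 ≤ (n:ℝ)}, ball d a.1 a.2 := by
      intro m n hmn
      exact biUnion_subset_biUnion_left
        (fun a ha => ⟨ha.1, le_trans ha.2 (Nat.cast_le.mpr hmn)⟩)
    calc μ {x | ENNReal.ofReal s < G x} ≤ μ (⋃ a ∈ T, ball d a.1 a.2) := measure_mono hsub
      _ = μ (⋃ n : ℕ, ⋃ a ∈ {a ∈ T | a.2 ≤ (n:ℝ)}, ball d a.1 a.2) := by rw [hU]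
      _ = ⨆ n : ℕ, μ (⋃ a ∈ {a ∈ T | a.2 ≤ (n:ℝ)}, ball d a.1 a.2) := hmono.measure_iUnion
      _ ≤ 2 * D * ν s univ := by
          apply iSup_le
          intro n
          exact my_vitali_weak d μ (ν s) κ hκ hd0 hdsym hdtri hballm Cμ hdoub k hk.le hJ
            {a ∈ T | a.2 ≤ (n:ℝ)} n
            (fun a ha => ⟨ha.1.1, ha.2, (hTfact a ha.1).1, (hTfact a ha.1).2⟩)
  -- sigma-finiteness of μ restricted to the support of f
  set S : Set X := {x | 0 < f x} with hSdef
  have hSm : MeasurableSet S := measurableSet_lt measurable_const hf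
  have hfppow : Measurable fun x => ENNReal.ofReal (f x) ^ p := (hf.ennreal_ofReal).pow_const p
  haveI hsf : SigmaFinite (μ.restrict S) := by
    refine ⟨⟨⟨fun n => {x | ((n:ℝ)+1)⁻¹ < f x} ∪ Sᶜ, fun _ => trivial, ?_, ?_⟩⟩⟩
    · intro n
      have hε0 : (0:ℝ) < ((n:ℝ)+1)⁻¹ := by positivity
      set ε : ℝ≥0∞ := ENNReal.ofReal (((n:ℝ)+1)⁻¹) ^ p with hεdef
      have hεne : ε ≠ 0 := by
        rw [hεdef]
        exact (ENNReal.rpow_pos (ENNReal.ofReal_pos.2 hε0) ENNReal.ofReal_ne_top).ne'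
      have hμlt : μ {x | ((n:ℝ)+1)⁻¹ < f x} < ∞ := by
        have hsub2 : {x | ((n:ℝ)+1)⁻¹ < f x} ⊆ {x | ε ≤ ENNReal.ofReal (f x) ^ p} := by
          intro x hx
          exact ENNReal.rpow_le_rpow (ENNReal.ofReal_le_ofReal (le_of_lt hx)) hp0.le
        have hmark := mul_meas_ge_le_lintegral₀ (μ := μ) hfppow.aemeasurable ε
        have hlt3 : μ {x | ε ≤ ENNReal.ofReal (f x) ^ p} < ∞ := by
          by_contra hcon
          push_neg at hcon
          have htopx : μ {x | ε ≤ ENNReal.ofReal (f x) ^ p} = ∞ := top_le_iff.mp hcon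
          rw [htopx, ENNReal.mul_top hεne] at hmark
          exact hfp (top_le_iff.mp hmark)
        exact lt_of_le_of_lt (measure_mono hsub2) hlt3
      calc μ.restrict S ({x | ((n:ℝ)+1)⁻¹ < f x} ∪ Sᶜ)
          ≤ μ.restrict S {x | ((n:ℝ)+1)⁻¹ < f x} + μ.restrict S Sᶜ := measure_union_le _ _
        _ ≤ μ {x | ((n:ℝ)+1)⁻¹ < f x} + 0 := by
            apply add_le_add
            · rw [Measure.restrict_apply (measurableSet_lt measurable_const hf)]
              exact measure_mono inter_subset_left
            · rw [Measure.restrict_apply hSm.compl, compl_inter_self]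
              simp
        _ < ∞ := by rw [add_zero]; exact hμlt
    · apply eq_univ_of_forall
      intro x
      rw [mem_iUnion]
      by_cases hx : 0 < f x
      · obtain ⟨n, hn⟩ := exists_nat_gt (f x)⁻¹
        refine ⟨n, Or.inl ?_⟩
        show ((n:ℝ)+1)⁻¹ < f x
        rw [inv_lt_comm₀ (by positivity) hx]
        linarith
      · exact ⟨0, Or.inr hx⟩
  -- the function ν s univ localizes to S
  have hrestr : ∀ s : ℝ, 0 < s → ν s univ = ∫⁻ x, hfun s x ∂(μ.restrict S) := by
    intro s hs
    rw [hνapp s univ MeasurableSet.univ, Measure.restrict_univ]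
    have hind : S.indicator (hfun s) = hfun s := by
      funext x
      by_cases hxS : x ∈ S
      · rw [indicator_of_mem hxS]
      · rw [indicator_of_notMem hxS]
        have hfx : ¬ (t0 * s < f x) := by
          simp only [hSdef, mem_setOf_eq, not_lt] at hxS
          nlinarith [mul_pos ht0pos hs]
        rw [hhfun]
        simp only [if_neg hfx]
    conv_lhs => rw [← hind]
    rw [lintegral_indicator hSm]
  -- measurable minorant of G^p with equal integral
  obtain ⟨g, hgmeas, hgle, hgint⟩ := exists_measurable_le_lintegral_eq μ (fun x => G x ^ p)
  rw [hgint]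
  -- joint measurability
  have hFmeas : Measurable (Function.uncurry fun (s : ℝ) (x : X) =>
      ENNReal.ofReal (p * s ^ (p-1)) * hfun s x) := by
    have h1 : Measurable fun q : ℝ × X => ENNReal.ofReal (p * q.1 ^ (p-1)) :=
      ((measurable_fst.pow_const (p-1)).const_mul p).ennreal_ofReal
    have h2 : Measurable fun q : ℝ × X => hfun q.1 q.2 := by
      apply Measurable.ite
      · exact measurableSet_lt (measurable_fst.const_mul t0) (hf.comp measurable_snd)
      · exact hQmeas.comp ((hf.comp measurable_snd).div measurable_fst)
      · exact measurable_const
    exact h1.mul h2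
  -- image fact for substitution
  have himg1 : (fun sr : ℝ => sr ^ p) '' Ioi 0 = Ioi (0:ℝ) := by
    ext t
    constructor
    · rintro ⟨sr, hsr, rfl⟩
      exact Real.rpow_pos_of_pos hsr p
    · intro ht
      refine ⟨t ^ p⁻¹, Real.rpow_pos_of_pos ht _, ?_⟩
      show (t ^ p⁻¹) ^ p = t
      rw [← Real.rpow_mul (le_of_lt ht), inv_mul_cancel₀ hp0', Real.rpow_one]
  have hderiv1 : ∀ sr ∈ Ioi (0:ℝ),
      HasDerivWithinAt (fun sr => sr ^ p) (p * sr ^ (p-1)) (Ioi 0) sr := fun sr hs =>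
    (Real.hasDerivAt_rpow_const (Or.inl (ne_of_gt hs))).hasDerivWithinAt
  have hinj1 : InjOn (fun sr : ℝ => sr ^ p) (Ioi 0) := by
    intro x hx y hy hxy
    rcases lt_trichotomy x y with h | h | h
    · exact absurd hxy (ne_of_lt (Real.rpow_lt_rpow (le_of_lt hx) h hp0))
    · exact h
    · exact absurd hxy.symm (ne_of_lt (Real.rpow_lt_rpow (le_of_lt hy) h hp0))
  have hKmax : (∫⁻ v in Ioi t0, ENNReal.ofReal (Φ (max v 0) / v ^ p / v)) = K := by
    rw [hKdef]
    apply setLIntegral_congr_fun measurableSet_Ioi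
    intro v hv
    beta_reduce
    rw [max_eq_left (le_of_lt (ht0pos.trans hv))]
  calc ∫⁻ x, g x ∂μ
      ≤ ∫⁻ t in Ioi (0:ℝ), μ {x | ENNReal.ofReal t < g x} := my_layercake μ hgmeas
    _ ≤ ∫⁻ t in Ioi (0:ℝ), 2 * D * ν (t ^ p⁻¹) univ := by
        apply lintegral_mono_ae
        filter_upwards [ae_restrict_mem measurableSet_Ioi] with t ht
        have hsub3 : {x | ENNReal.ofReal t < g x}
            ⊆ {x | ENNReal.ofReal (t ^ p⁻¹) < G x} := by
          intro x hx
          have h1 : ENNReal.ofReal t < G x ^ p := lt_of_lt_of_le hx (hgle x)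
          have heq : ENNReal.ofReal (t ^ p⁻¹) ^ p = ENNReal.ofReal t := by
            rw [ENNReal.ofReal_rpow_of_pos (Real.rpow_pos_of_pos ht _),
              ← Real.rpow_mul (le_of_lt ht), inv_mul_cancel₀ hp0', Real.rpow_one]
          rw [← heq] at h1
          exact (ENNReal.rpow_lt_rpow_iff hp0).mp h1
        exact le_trans (measure_mono hsub3) (hweak _ (Real.rpow_pos_of_pos ht _))
    _ = ∫⁻ sr in Ioi (0:ℝ), ENNReal.ofReal |p * sr ^ (p-1)|
          * (2 * D * ν ((sr ^ p) ^ p⁻¹) univ) := by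
        conv_lhs => rw [← himg1]
        exact my_lintegral_image measurableSet_Ioi hderiv1 hinj1 _
    _ = ∫⁻ sr in Ioi (0:ℝ), 2 * D
          * ∫⁻ x, ENNReal.ofReal (p * sr ^ (p-1)) * hfun sr x ∂(μ.restrict S) := by
        apply setLIntegral_congr_fun measurableSet_Ioi
        intro sr hs
        beta_reduce
        have he1 : (sr ^ p) ^ p⁻¹ = sr := by
          rw [← Real.rpow_mul (le_of_lt hs), mul_inv_cancel₀ hp0', Real.rpow_one]
        have hs' : (0:ℝ) < sr := hs
        have he2 : |p * sr ^ (p-1)| = p * sr ^ (p-1) :=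
          abs_of_pos (mul_pos hp0 (Real.rpow_pos_of_pos hs' _))
        rw [he1, he2, hrestr sr hs, lintegral_const_mul' _ _ ENNReal.ofReal_ne_top]
        ring
    _ = 2 * D * ∫⁻ sr in Ioi (0:ℝ),
          ∫⁻ x, ENNReal.ofReal (p * sr ^ (p-1)) * hfun sr x ∂(μ.restrict S) :=
        lintegral_const_mul' _ _ (ENNReal.mul_ne_top (by norm_num) hDne)
    _ = 2 * D * ∫⁻ x, (∫⁻ sr in Ioi (0:ℝ),
          ENNReal.ofReal (p * sr ^ (p-1)) * hfun sr x) ∂(μ.restrict S) := by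
        rw [lintegral_lintegral_swap hFmeas.aemeasurable]
    _ = 2 * D * ∫⁻ x, (ENNReal.ofReal p * K) * ENNReal.ofReal (f x) ^ p ∂(μ.restrict S) := by
        congr 1
        apply lintegral_congr_ae
        filter_upwards [ae_restrict_mem hSm] with x hxS
        have hcx : 0 < f x := hxS
        have hin := my_inner Φ hp0 ht0pos hcx
        simp only [hhfun, hQdef]
        rw [hin, hKmax, ENNReal.ofReal_mul hp0.le,
          ENNReal.ofReal_rpow_of_pos hcx]
        ring
    _ = 2 * D * ((ENNReal.ofReal p * K) * ∫⁻ x, ENNReal.ofReal (f x) ^ p ∂(μ.restrict S)) := by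
        rw [lintegral_const_mul' _ _ (ENNReal.mul_ne_top ENNReal.ofReal_ne_top hKne)]
    _ = Ctot * ∫⁻ x, ENNReal.ofReal (f x) ^ p ∂(μ.restrict S) := by
        rw [hCtotdef]; ring
    _ ≤ Ctot * ∫⁻ x, ENNReal.ofReal (f x) ^ p ∂μ :=
        mul_le_mul_right (lintegral_mono' Measure.restrict_le_self le_rfl) _
    _ ≤ ENNReal.ofReal (Ctot.toReal + 1) * ∫⁻ x, ENNReal.ofReal (f x) ^ p ∂μ :=
        mul_le_mul_left hCle _


end HT
end
end
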